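/- arXiv:1503.08296 — 10 statements merged into one kernel-verified Lean document; each statement's English description precedes it below -/
import Mathlib

section
/- Let l > 1 and let c₀, k₀ : [0,∞) → ℝ be continuous and nonnegative functions such that the integral K := ∫₀^∞ k₀(t) exp[(l−1)∫₀^t c₀(s) ds] dt satisfies 0 < K < ∞. If w₀ > ((l−1)K)^{−1/(l−1)}, then there is no differentiable function w : [0,∞) → ℝ with w(0) = w₀ and w′(t) = c₀(t) w(t) + k₀(t) w(t)^l for all t ≥ 0. -/
/-!
A solution stays positive, because `w' ≥ 0` wherever `w > 0`. For positive `w`, the Bernoulli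
substitution `g = w ^ (1 - l) * exp ((l - 1) * C)` with `C t = ∫₀^t c₀` linearises the equation
to `g' = (1 - l) * k₀ * exp ((l - 1) * C)`, so
`0 < g T = w₀ ^ (1 - l) - (l - 1) * ∫₀^T k₀ exp ((l - 1) C)` for every `T ≥ 0`.
Letting `T → ∞` gives `(l - 1) K ≤ w₀ ^ (1 - l)`, i.e. `w₀ ≤ ((l - 1) K) ^ (-1 / (l - 1))`.
-/

open MeasureTheory Set Filter

theorem pos_of_hasDerivAt_nonneg_of_pos {f f' : ℝ → ℝ} {a : ℝ} (hf : ContinuousOn f (Ici a))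
    (hf' : ∀ x ∈ Ioi a, HasDerivAt f (f' x) x) (hfa : 0 < f a)
    (hmono : ∀ x ∈ Ioi a, 0 < f x → 0 ≤ f' x) {x : ℝ} (hx : a ≤ x) : 0 < f x := by
  by_contra! hfx
  have hclosed : IsClosed (Icc a x ∩ f ⁻¹' Iic 0) :=
    (hf.mono Icc_subset_Ici_self).preimage_isClosed_of_isClosed isClosed_Icc isClosed_Iic
  obtain ⟨T, ⟨⟨haT, hTx⟩, hfT⟩, hleast⟩ :=
    (isCompact_Icc.of_isClosed_subset hclosed inter_subset_left).exists_isLeast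
      ⟨x, ⟨hx, le_rfl⟩, hfx⟩
  have hpos_before : ∀ y ∈ Ico a T, 0 < f y := fun y ⟨hay, hyT⟩ => by
    by_contra! hfy
    exact (hleast ⟨⟨hay, hyT.le.trans hTx⟩, hfy⟩).not_gt hyT
  have haT' : a < T := haT.lt_of_ne fun h => (h ▸ hfa).not_ge hfT
  have hmonoOn : MonotoneOn f (Icc a T) := by
    refine monotoneOn_of_hasDerivWithinAt_nonneg (f' := f') (convex_Icc a T)
      (hf.mono Icc_subset_Ici_self) (fun y hy => ?_) (fun y hy => ?_) <;>
      rw [interior_Icc] at hy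
    · exact (hf' y hy.1).hasDerivWithinAt
    · exact hmono y hy.1 (hpos_before y ⟨hy.1.le, hy.2⟩)
  exact (hfa.trans_le (hmonoOn ⟨le_rfl, haT'.le⟩ ⟨haT'.le, le_rfl⟩ haT'.le)).not_ge hfT

theorem hasDerivAt_integral_of_continuousOn_Icc {c : ℝ → ℝ} {a b t : ℝ}
    (hc : ContinuousOn c (Icc a b)) (ht : t ∈ Ioo a b) :
    HasDerivAt (fun u => ∫ s in a..u, c s) (c t) t :=
  intervalIntegral.integral_hasDerivAt_right
    ((hc.mono (Icc_subset_Icc_right ht.2.le)).intervalIntegrable_of_Icc ht.1.le)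
    ((hc.mono Ioo_subset_Icc_self).stronglyMeasurableAtFilter isOpen_Ioo t ht)
    (hc.continuousAt (Icc_mem_nhds ht.1 ht.2))

theorem hasDerivAt_bernoulli_substitution {w C : ℝ → ℝ} {c k l t : ℝ}
    (hw : HasDerivAt w (c * w t + k * w t ^ l) t) (hC : HasDerivAt C c t) (hwt : 0 < w t) :
    HasDerivAt (fun s => w s ^ (1 - l) * Real.exp ((l - 1) * C s))
      ((1 - l) * (k * Real.exp ((l - 1) * C t))) t := by
  refine ((hw.rpow_const (p := 1 - l) (Or.inl hwt.ne')).mul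
    (hC.const_mul (l - 1)).exp).congr_deriv ?_
  have hl : w t ^ l * w t ^ (1 - l - 1) = 1 := by
    rw [← Real.rpow_add hwt, show l + (1 - l - 1) = 0 by ring, Real.rpow_zero]
  have h1 : w t * w t ^ (1 - l - 1) = w t ^ (1 - l) := by
    conv_lhs => arg 1; rw [← Real.rpow_one (w t)]
    rw [← Real.rpow_add hwt, add_sub_cancel]
  set E := Real.exp ((l - 1) * C t)
  linear_combination (k * (1 - l) * E) * hl + (c * (1 - l) * E) * h1

theorem mul_integral_lt_of_bernoulli {l T : ℝ} {c k w : ℝ → ℝ} (hT : 0 ≤ T)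
    (hc : ContinuousOn c (Icc 0 T))
    (hk : IntervalIntegrable (fun t => k t * Real.exp ((l - 1) * ∫ s in (0:ℝ)..t, c s)) volume 0 T)
    (hwc : ContinuousOn w (Icc 0 T))
    (hw : ∀ t ∈ Ioo 0 T, HasDerivAt w (c t * w t + k t * w t ^ l) t)
    (hpos : ∀ t ∈ Icc 0 T, 0 < w t) :
    (l - 1) * ∫ t in (0:ℝ)..T, k t * Real.exp ((l - 1) * ∫ s in (0:ℝ)..t, c s) < w 0 ^ (1 - l) := by
  set g := fun t => w t ^ (1 - l) * Real.exp ((l - 1) * ∫ s in (0:ℝ)..t, c s)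
  have hCc : ContinuousOn (fun t => ∫ s in (0:ℝ)..t, c s) (Icc 0 T) := by
    simpa only [uIcc_of_le hT] using intervalIntegral.continuousOn_primitive_interval'
      (hc.intervalIntegrable_of_Icc hT) left_mem_uIcc
  have hgc : ContinuousOn g (Icc 0 T) :=
    (hwc.rpow_const fun t ht => Or.inl (hpos t ht).ne').mul (continuousOn_const.mul hCc).rexp
  have hftc := intervalIntegral.integral_eq_sub_of_hasDerivAt_of_le hT hgc
    (fun t ht => hasDerivAt_bernoulli_substitution (hw t ht)
      (hasDerivAt_integral_of_continuousOn_Icc hc ht) (hpos t (Ioo_subset_Icc_self ht)))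
    (hk.const_mul (1 - l))
  have hg0 : g 0 = w 0 ^ (1 - l) := by simp [g]
  have hgT : 0 < g T := by have := hpos T ⟨hT, le_rfl⟩; positivity
  rw [intervalIntegral.integral_const_mul, hg0] at hftc
  linarith

theorem rpow_neg_lt_of_rpow_neg_one_div_lt {a p x : ℝ} (ha : 0 < a) (hp : 0 < p)
    (hx : a ^ (-(1 / p)) < x) : x ^ (-p) < a :=
  calc x ^ (-p) < (a ^ (-(1 / p))) ^ (-p) :=
        Real.rpow_lt_rpow_of_neg (by positivity) hx (neg_neg_of_pos hp)
    _ = a := by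
      rw [← Real.rpow_mul ha.le, neg_mul_neg, one_div, inv_mul_cancel₀ hp.ne', Real.rpow_one]

theorem stmt_2_general (l : ℝ) (hl : 1 < l) (c₀ k₀ : ℝ → ℝ)
    (hc_cont : ContinuousOn c₀ (Ici 0)) (hc_nonneg : ∀ t ≥ (0:ℝ), 0 ≤ c₀ t)
    (hk_nonneg : ∀ t ≥ (0:ℝ), 0 ≤ k₀ t)
    (hK_int : IntegrableOn
      (fun t => k₀ t * Real.exp ((l - 1) * ∫ s in (0:ℝ)..t, c₀ s)) (Ioi 0))
    (hK_pos : 0 < ∫ t in Ioi (0:ℝ), k₀ t * Real.exp ((l - 1) * ∫ s in (0:ℝ)..t, c₀ s))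
    (w₀ : ℝ)
    (hw₀ : w₀ > ((l - 1) *
      ∫ t in Ioi (0:ℝ), k₀ t * Real.exp ((l - 1) * ∫ s in (0:ℝ)..t, c₀ s))
        ^ (-(1 / (l - 1)) : ℝ)) :
    ¬ ∃ w : ℝ → ℝ, w 0 = w₀ ∧
      ∀ t ≥ (0:ℝ), HasDerivAt w (c₀ t * w t + k₀ t * w t ^ l) t := by
  rintro ⟨w, rfl, hw⟩
  set K := ∫ t in Ioi (0:ℝ), k₀ t * Real.exp ((l - 1) * ∫ s in (0:ℝ)..t, c₀ s)
  have hl1 : 0 < l - 1 := sub_pos.2 hl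
  have hKl : 0 < (l - 1) * K := mul_pos hl1 hK_pos
  have hwc : ContinuousOn w (Ici 0) := fun t ht => (hw t ht).continuousAt.continuousWithinAt
  have hwpos : ∀ t ≥ (0:ℝ), 0 < w t := fun t =>
    pos_of_hasDerivAt_nonneg_of_pos hwc (fun x hx => hw x hx.le)
      ((Real.rpow_pos_of_pos hKl _).trans hw₀) fun x hx hwx => by
        have := hc_nonneg x hx.le; have := hk_nonneg x hx.le; positivity
  have hbound : (l - 1) * K ≤ w 0 ^ (1 - l) := by
    refine le_of_tendsto
      ((intervalIntegral_tendsto_integral_Ioi 0 hK_int tendsto_id).const_mul _) ?_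
    filter_upwards [eventually_ge_atTop 0] with T hT
    exact (mul_integral_lt_of_bernoulli hT (hc_cont.mono Icc_subset_Ici_self)
      ((intervalIntegrable_iff_integrableOn_Ioc_of_le hT).2 (hK_int.mono_set Ioc_subset_Ioi_self))
      (hwc.mono Icc_subset_Ici_self) (fun t ht => hw t ht.1.le) fun t ht => hwpos t ht.1).le
  have hlt := rpow_neg_lt_of_rpow_neg_one_div_lt hKl hl1 hw₀
  rw [neg_sub] at hlt
  linarith

/-- If `l > 1`, `c₀, k₀` are continuous and nonnegative on `[0,∞)`,
`K := ∫₀^∞ k₀(t) exp[(l−1)∫₀^t c₀] dt` satisfies `0 < K < ∞`, and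
`w₀ > ((l−1)K)^{−1/(l−1)}`, then the Cauchy problem `w′ = c₀(t)w + k₀(t)w^l`,
`w(0) = w₀` has no global solution on `[0,∞)`. -/
theorem stmt_2 (l : ℝ) (hl : 1 < l) (c₀ k₀ : ℝ → ℝ)
    (hc_cont : ContinuousOn c₀ (Ici 0)) (hc_nonneg : ∀ t ≥ (0:ℝ), 0 ≤ c₀ t)
    (hk_cont : ContinuousOn k₀ (Ici 0)) (hk_nonneg : ∀ t ≥ (0:ℝ), 0 ≤ k₀ t)
    (hK_int : IntegrableOn
      (fun t => k₀ t * Real.exp ((l - 1) * ∫ s in (0:ℝ)..t, c₀ s)) (Ioi 0))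
    (hK_pos : 0 < ∫ t in Ioi (0:ℝ), k₀ t * Real.exp ((l - 1) * ∫ s in (0:ℝ)..t, c₀ s))
    (w₀ : ℝ)
    (hw₀ : w₀ > ((l - 1) *
      ∫ t in Ioi (0:ℝ), k₀ t * Real.exp ((l - 1) * ∫ s in (0:ℝ)..t, c₀ s))
        ^ (-(1 / (l - 1)) : ℝ)) :
    ¬ ∃ w : ℝ → ℝ, w 0 = w₀ ∧
      ∀ t ≥ (0:ℝ), HasDerivAt w (c₀ t * w t + k₀ t * w t ^ l) t :=
  stmt_2_general l hl c₀ k₀ hc_cont hc_nonneg hk_nonneg hK_int hK_pos w₀ hw₀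
end

section
/- Let l > 1 and let c₀, k₀ : [0,∞) → ℝ be continuous and nonnegative functions such that ∫₀^T k₀(t) exp[(l−1)∫₀^t c₀(s) ds] dt → ∞ as T → ∞. Then for every w₀ > 0 there is no differentiable function w : [0,∞) → ℝ with w(0) = w₀ and w′(t) = c₀(t) w(t) + k₀(t) w(t)^l for all t ≥ 0. -/
open MeasureTheory Set Filter

/-!
Along a positive solution the Bernoulli substitution `v = w ^ (1 - l)` linearises the equation,
and with `E(t) = exp ((l - 1) ∫₀ᵗ c₀)` the quantity `w ^ (1 - l) E + (l - 1) ∫₀ᵗ k₀ E` is a first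
integral. Solutions starting at `w₀ > 0` stay positive because `w' ≥ 0` wherever `w > 0`, so
`(l - 1) ∫₀ᵗ k₀ E < w₀ ^ (1 - l)` for all `t ≥ 0`, which contradicts the divergence of that integral.
-/

theorem intervalIntegral.hasDerivWithinAt_integral_Ici {f : ℝ → ℝ} {a x : ℝ}
    (hf : ContinuousOn f (Ici a)) (hx : a ≤ x) :
    HasDerivWithinAt (fun t => ∫ s in a..t, f s) (f x) (Ici a) x := by
  have hint : IntervalIntegrable f volume a x :=
    (hf.mono (uIcc_of_le hx ▸ Icc_subset_Ici_self)).intervalIntegrable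
  rcases hx.eq_or_lt with rfl | hx
  · exact integral_hasDerivWithinAt_right hint
      ⟨Ici a, mem_of_superset self_mem_nhdsWithin Ioi_subset_Ici_self,
        hf.aestronglyMeasurable measurableSet_Ici⟩
      ((hf a self_mem_Ici).mono Ioi_subset_Ici_self)
  · exact (integral_hasDerivAt_right hint
      ⟨Ici a, Ici_mem_nhds hx, hf.aestronglyMeasurable measurableSet_Ici⟩
      ((hf x hx.le).continuousAt (Ici_mem_nhds hx))).hasDerivWithinAt

theorem forall_Ici_pos_of_deriv_nonneg_of_pos {f f' : ℝ → ℝ} {a : ℝ}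
    (hf : ∀ x ∈ Ici a, HasDerivWithinAt f (f' x) (Ici a) x) (ha : 0 < f a)
    (hf' : ∀ x ∈ Ici a, 0 < f x → 0 ≤ f' x) : ∀ x ∈ Ici a, 0 < f x := by
  by_contra! ⟨x₁, hx₁, hfx₁⟩
  have hcont : ContinuousOn f (Ici a) := fun x hx => (hf x hx).continuousWithinAt
  set S := Ici a ∩ f ⁻¹' Iic 0
  have hS : IsClosed S := hcont.preimage_isClosed_of_isClosed isClosed_Ici isClosed_Iic
  have hSbdd : BddBelow S := ⟨a, fun _ hy => hy.1⟩
  obtain ⟨ht₀a, hft₀⟩ : sInf S ∈ S := hS.csInf_mem ⟨x₁, hx₁, hfx₁⟩ hSbdd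
  have hpos : ∀ x ∈ Ico a (sInf S), 0 < f x := fun x hx =>
    lt_of_not_ge fun hfx => (csInf_le hSbdd ⟨hx.1, hfx⟩).not_gt hx.2
  have hmono : MonotoneOn f (Icc a (sInf S)) := by
    refine monotoneOn_of_hasDerivWithinAt_nonneg (f' := f') (convex_Icc _ _)
      (hcont.mono Icc_subset_Ici_self) (fun x hx => ?_) (fun x hx => ?_) <;>
      simp only [interior_Icc] at hx ⊢
    · exact (hf x hx.1.le).mono (Ioo_subset_Ioi_self.trans Ioi_subset_Ici_self)
    · exact hf' x hx.1.le (hpos x (Ioo_subset_Ico_self hx))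
  have := hmono (left_mem_Icc.2 ht₀a) (right_mem_Icc.2 ht₀a) ht₀a
  exact (ha.trans_le this).not_ge hft₀

theorem HasDerivWithinAt.bernoulli_first_integral {w c k F G : ℝ → ℝ} {s : Set ℝ} {l x : ℝ}
    (hw : HasDerivWithinAt w (c x * w x + k x * w x ^ l) s x) (hwx : 0 < w x)
    (hF : HasDerivWithinAt F (c x) s x)
    (hG : HasDerivWithinAt G (k x * Real.exp ((l - 1) * F x)) s x) :
    HasDerivWithinAt (fun t => w t ^ (1 - l) * Real.exp ((l - 1) * F t) + (l - 1) * G t) 0 s x := by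
  have hv : HasDerivWithinAt (fun t => w t ^ (1 - l)) _ s x := hw.rpow_const (Or.inl hwx.ne')
  refine ((hv.mul (hF.const_mul (l - 1)).exp).add (hG.const_mul (l - 1))).congr_deriv ?_
  have hw_one : w x ^ (1 - l - 1) * w x = w x ^ (1 - l) := by
    rw [← Real.rpow_add_one hwx.ne']
    ring_nf
  have hw_l : w x ^ (1 - l - 1) * w x ^ l = 1 := by
    rw [← Real.rpow_add hwx]
    norm_num
  linear_combination (1 - l) * Real.exp ((l - 1) * F x) * (c x * hw_one + k x * hw_l)

/-- If `l > 1`, `c₀, k₀` are continuous and nonnegative on `[0,∞)` and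
`∫₀^T k₀(t) exp[(l−1)∫₀^t c₀] dt → ∞` as `T → ∞`, then for every `w₀ > 0` the
Cauchy problem `w′ = c₀(t)w + k₀(t)w^l`, `w(0) = w₀` has no global solution. -/
theorem stmt_3 (l : ℝ) (hl : 1 < l) (c₀ k₀ : ℝ → ℝ)
    (hc_cont : ContinuousOn c₀ (Ici 0)) (hc_nonneg : ∀ t ≥ (0:ℝ), 0 ≤ c₀ t)
    (hk_cont : ContinuousOn k₀ (Ici 0)) (hk_nonneg : ∀ t ≥ (0:ℝ), 0 ≤ k₀ t)
    (hdiv : Tendsto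
      (fun T => ∫ t in (0:ℝ)..T, k₀ t * Real.exp ((l - 1) * ∫ s in (0:ℝ)..t, c₀ s))
      atTop atTop) :
    ∀ w₀ : ℝ, 0 < w₀ →
      ¬ ∃ w : ℝ → ℝ, w 0 = w₀ ∧
        ∀ t ≥ (0:ℝ), HasDerivAt w (c₀ t * w t + k₀ t * w t ^ l) t := by
  rintro w₀ hw₀ ⟨w, hw0, hw⟩
  set F : ℝ → ℝ := fun t => ∫ s in (0:ℝ)..t, c₀ s
  set G : ℝ → ℝ := fun t => ∫ s in (0:ℝ)..t, k₀ s * Real.exp ((l - 1) * F s)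
  have hF (x : ℝ) (hx : x ∈ Ici 0) : HasDerivWithinAt F (c₀ x) (Ici 0) x :=
    intervalIntegral.hasDerivWithinAt_integral_Ici hc_cont hx
  have hG (x : ℝ) (hx : x ∈ Ici 0) :
      HasDerivWithinAt G (k₀ x * Real.exp ((l - 1) * F x)) (Ici 0) x :=
    intervalIntegral.hasDerivWithinAt_integral_Ici
      (hk_cont.mul (Real.continuous_exp.comp_continuousOn
        (continuousOn_const.mul fun y hy => (hF y hy).continuousWithinAt))) hx
  have hwpos : ∀ x ∈ Ici (0:ℝ), 0 < w x :=
    forall_Ici_pos_of_deriv_nonneg_of_pos (fun x hx => (hw x hx).hasDerivWithinAt) (hw0 ▸ hw₀)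
      fun x hx hwx => add_nonneg (mul_nonneg (hc_nonneg x hx) hwx.le)
        (mul_nonneg (hk_nonneg x hx) (Real.rpow_nonneg hwx.le l))
  have hanti : AntitoneOn
      (fun t => w t ^ (1 - l) * Real.exp ((l - 1) * F t) + (l - 1) * G t) (Ici 0) := by
    have hφ (x : ℝ) (hx : x ∈ Ici 0) := (hw x hx).hasDerivWithinAt.bernoulli_first_integral
      (hwpos x hx) (hF x hx) (hG x hx)
    exact antitoneOn_of_hasDerivWithinAt_nonpos (convex_Ici 0)
      (fun x hx => (hφ x hx).continuousWithinAt)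
      (fun x hx => (hφ x (interior_subset hx)).mono interior_subset) fun _ _ => le_rfl
  have hbound (b : ℝ) (hb : b ∈ Ici 0) : (l - 1) * G b < w₀ ^ (1 - l) := by
    have hφb := hanti self_mem_Ici hb hb
    simp only [F, G, intervalIntegral.integral_same, mul_zero, Real.exp_zero, hw0] at hφb
    have hwb := Real.rpow_pos_of_pos (hwpos b hb) (1 - l)
    nlinarith [Real.exp_pos ((l - 1) * F b)]
  obtain ⟨b, hGb, hb⟩ := ((hdiv.eventually_ge_atTop (w₀ ^ (1 - l) / (l - 1))).and
    (eventually_ge_atTop 0)).exists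
  rw [div_le_iff₀ (by linarith)] at hGb
  linarith [hbound b hb]
end

section
/- Let p > 1 and let c₀, k₀ : [0,∞) → ℝ be continuous and nonnegative functions such that ∫₀^T c₀(t) exp[(p−1)∫₀^t k₀(s) ds] dt → ∞ as T → ∞. Then for every w₀ > 0 there is no differentiable function w : [0,∞) → ℝ with w(0) = w₀ and w′(t) = c₀(t) w(t)^p + k₀(t) w(t) for all t ≥ 0. -/
/-!
Along a positive solution, the Bernoulli substitution `φ = w ^ (1 - p) * exp ((p - 1) * K)`, with
`K t = ∫₀ᵗ k₀`, linearizes the equation to `φ' = (1 - p) * c₀ * exp ((p - 1) * K)`. Hence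
`0 < φ T = w₀ ^ (1 - p) - (p - 1) * ∫₀ᵀ c₀ * exp ((p - 1) * K)`, so the integral in the hypothesis
stays below `w₀ ^ (1 - p) / (p - 1)`. A solution does stay positive, since it is nondecreasing
wherever it is positive.
-/

open MeasureTheory Set Filter

theorem intervalIntegral.hasDerivWithinAt_integral_Icc {E : Type*} [NormedAddCommGroup E]
    [NormedSpace ℝ E] [CompleteSpace E] {f : ℝ → E} {a b t : ℝ}
    (hf : ContinuousOn f (Icc a b)) (ht : t ∈ Icc a b) :
    HasDerivWithinAt (fun u => ∫ x in a..u, f x) (f t) (Icc a b) t :=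
  -- provides the `FTCFilter` instance for `Icc a b` at `t`
  have : Fact (t ∈ Icc a b) := ⟨ht⟩
  integral_hasDerivWithinAt_right
    ((hf.mono (Icc_subset_Icc_right ht.2)).intervalIntegrable_of_Icc ht.1)
    (hf.stronglyMeasurableAtFilter_nhdsWithin measurableSet_Icc t) (hf t ht)

theorem intervalIntegral.integral_eq_sub_of_hasDerivWithinAt_Icc {E : Type*}
    [NormedAddCommGroup E] [NormedSpace ℝ E] [CompleteSpace E] {f f' : ℝ → E} {a b : ℝ}
    (hab : a ≤ b) (hf : ∀ x ∈ Icc a b, HasDerivWithinAt f (f' x) (Icc a b) x)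
    (hint : IntervalIntegrable f' volume a b) : ∫ y in a..b, f' y = f b - f a :=
  integral_eq_sub_of_hasDerivAt_of_le hab (fun x hx => (hf x hx).continuousWithinAt)
    (fun x hx => (hf x (Ioo_subset_Icc_self hx)).hasDerivAt (Icc_mem_nhds hx.1 hx.2)) hint

theorem pos_of_hasDerivWithinAt_nonneg_where_pos {f f' : ℝ → ℝ} {a b : ℝ}
    (hf : ∀ x ∈ Icc a b, HasDerivWithinAt f (f' x) (Icc a b) x) (ha : 0 < f a)
    (hf' : ∀ x ∈ Ico a b, 0 < f x → 0 ≤ f' x) : ∀ x ∈ Icc a b, 0 < f x := by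
  intro x hx
  -- `f` cannot reach the strictly decreasing positive fence `f a * exp (a - t)`: where it
  -- touches the fence it is positive, so it is nondecreasing there.
  have hfence_pos (y : ℝ) : 0 < f a * Real.exp (a - y) := mul_pos ha (Real.exp_pos _)
  have hfence_deriv (y : ℝ) :
      HasDerivAt (fun t => -(f a * Real.exp (a - t))) (f a * Real.exp (a - y)) y := by
    simpa using (((hasDerivAt_id y).const_sub a).exp.const_mul (f a)).fun_neg
  have hle := image_le_of_deriv_right_lt_deriv_boundary (f := fun t => -f t)
    (fun y hy => (hf y hy).continuousWithinAt.neg)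
    (fun y hy => ((hf y (Ico_subset_Icc_self hy)).mono_of_mem_nhdsWithin
      (Icc_mem_nhdsGE_of_mem hy)).neg)
    (by simp) hfence_deriv
    (fun y hy hfy => by linarith [hf' y hy (by linarith [hfence_pos y]), hfence_pos y]) hx
  linarith [hfence_pos x]

theorem hasDerivWithinAt_bernoulli_substitution {w K : ℝ → ℝ} {c k p t : ℝ} {s : Set ℝ}
    (hw : HasDerivWithinAt w (c * w t ^ p + k * w t) s t) (hK : HasDerivWithinAt K k s t)
    (hpos : 0 < w t) :
    HasDerivWithinAt (fun u => w u ^ (1 - p) * Real.exp ((p - 1) * K u))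
      ((1 - p) * (c * Real.exp ((p - 1) * K t))) s t := by
  refine ((hw.rpow_const (p := 1 - p) (Or.inl hpos.ne')).mul
    (hK.const_mul (p - 1)).exp).congr_deriv ?_
  have hp_cancel : w t ^ p * w t ^ (1 - p - 1) = 1 := by
    rw [← Real.rpow_add hpos]; norm_num
  have h1_add : w t * w t ^ (1 - p - 1) = w t ^ (1 - p) := by
    rw [Real.rpow_sub_one hpos.ne']; field_simp
  linear_combination ((1 - p) * c * Real.exp ((p - 1) * K t)) * hp_cancel +
    ((1 - p) * k * Real.exp ((p - 1) * K t)) * h1_add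

theorem mul_integral_lt_rpow_of_bernoulli_solution {p a b : ℝ} {c k w : ℝ → ℝ} (hab : a ≤ b)
    (hc : ContinuousOn c (Icc a b)) (hc0 : ∀ t ∈ Icc a b, 0 ≤ c t)
    (hk : ContinuousOn k (Icc a b)) (hk0 : ∀ t ∈ Icc a b, 0 ≤ k t) (hwa : 0 < w a)
    (hw : ∀ t ∈ Icc a b, HasDerivWithinAt w (c t * w t ^ p + k t * w t) (Icc a b) t) :
    (p - 1) * ∫ t in a..b, c t * Real.exp ((p - 1) * ∫ s in a..t, k s) < w a ^ (1 - p) := by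
  set K : ℝ → ℝ := fun t => ∫ s in a..t, k s
  have hK (t) (ht : t ∈ Icc a b) : HasDerivWithinAt K (k t) (Icc a b) t :=
    intervalIntegral.hasDerivWithinAt_integral_Icc hk ht
  have hpos : ∀ t ∈ Icc a b, 0 < w t := by
    refine pos_of_hasDerivWithinAt_nonneg_where_pos hw hwa fun t ht hwt => ?_
    have := hc0 t (Ico_subset_Icc_self ht)
    have := hk0 t (Ico_subset_Icc_self ht)
    positivity
  have hint :
      IntervalIntegrable (fun t => (1 - p) * (c t * Real.exp ((p - 1) * K t))) volume a b :=
    (continuousOn_const.mul (hc.mul (continuousOn_const.mul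
      fun t ht => (hK t ht).continuousWithinAt).rexp)).intervalIntegrable_of_Icc hab
  have hFTC := intervalIntegral.integral_eq_sub_of_hasDerivWithinAt_Icc hab
    (fun t ht => hasDerivWithinAt_bernoulli_substitution (hw t ht) (hK t ht) (hpos t ht)) hint
  have hKa : K a = 0 := intervalIntegral.integral_same
  rw [intervalIntegral.integral_const_mul, hKa, mul_zero, Real.exp_zero, mul_one] at hFTC
  have hφb : 0 < w b ^ (1 - p) * Real.exp ((p - 1) * K b) := by
    have := hpos b ⟨hab, le_rfl⟩
    positivity
  linarith

/-- If `p > 1`, `c₀, k₀` are continuous and nonnegative on `[0,∞)` and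
`∫₀^T c₀(t) exp[(p−1)∫₀^t k₀] dt → ∞` as `T → ∞`, then for every `w₀ > 0` the
Cauchy problem `w′ = c₀(t)w^p + k₀(t)w`, `w(0) = w₀` has no global solution. -/
theorem stmt_4 (p : ℝ) (hp : 1 < p) (c₀ k₀ : ℝ → ℝ)
    (hc_cont : ContinuousOn c₀ (Ici 0)) (hc_nonneg : ∀ t ≥ (0:ℝ), 0 ≤ c₀ t)
    (hk_cont : ContinuousOn k₀ (Ici 0)) (hk_nonneg : ∀ t ≥ (0:ℝ), 0 ≤ k₀ t)
    (hdiv : Tendsto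
      (fun T => ∫ t in (0:ℝ)..T, c₀ t * Real.exp ((p - 1) * ∫ s in (0:ℝ)..t, k₀ s))
      atTop atTop) :
    ∀ w₀ : ℝ, 0 < w₀ →
      ¬ ∃ w : ℝ → ℝ, w 0 = w₀ ∧
        ∀ t ≥ (0:ℝ), HasDerivAt w (c₀ t * w t ^ p + k₀ t * w t) t := by
  rintro w₀ hw₀ ⟨w, rfl, hw⟩
  obtain ⟨T, hT, hlarge⟩ := ((eventually_ge_atTop 0).and
    (hdiv.eventually_gt_atTop (w 0 ^ (1 - p) / (p - 1)))).exists
  have hbound := mul_integral_lt_rpow_of_bernoulli_solution hT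
    (hc_cont.mono Icc_subset_Ici_self) (fun t ht => hc_nonneg t ht.1)
    (hk_cont.mono Icc_subset_Ici_self) (fun t ht => hk_nonneg t ht.1) hw₀
    (fun t ht => (hw t ht.1).hasDerivWithinAt)
  rw [← lt_div_iff₀' (sub_pos.2 hp)] at hbound
  exact hlarge.not_gt hbound
end

section
/- Let p > 1, l > 1, and let c₀, k₀ : [0,∞) → ℝ be continuous and nonnegative with 0 < ∫₀^∞ c₀(t) dt < ∞ and 0 < ∫₀^∞ k₀(t) dt < ∞. If w₀ > min{((p−1)∫₀^∞ c₀(t) dt)^{−1/(p−1)}, ((l−1)∫₀^∞ k₀(t) dt)^{−1/(l−1)}}, then there is no differentiable function w : [0,∞) → ℝ with w(0) = w₀ and w′(t) = c₀(t) w(t)^p + k₀(t) w(t)^l for all t ≥ 0. -/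
open MeasureTheory Set Filter Topology

/-!
The right-hand side is nonnegative wherever `w ≥ 0`, so a solution starting at `w₀ > 0` stays
positive. Keeping only one of the two terms, `w' ≥ c w^p`, hence `(w^(1-p))' ≤ -(p-1) c` and
`w(T)^(1-p) ≤ w₀^(1-p) - (p-1) ∫₀ᵀ c`. The bound on `w₀` says precisely that
`w₀^(1-p) < (p-1) ∫₀^∞ c`, so the right-hand side is negative for large `T`, which is absurd.
-/

theorem pos_of_hasDerivAt_of_nonneg {w f : ℝ → ℝ} (hw : ∀ t ≥ 0, HasDerivAt w (f t) t)
    (hf : ∀ t ≥ 0, 0 ≤ w t → 0 ≤ f t) (h₀ : 0 < w 0) {t : ℝ} (ht : 0 ≤ t) : 0 < w t := by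
  by_contra! hwt
  have hcont : ContinuousOn w (Icc 0 t) := fun s hs =>
    (hw s hs.1).continuousAt.continuousWithinAt
  set S := Icc 0 t ∩ w ⁻¹' Iic 0
  have hS : IsClosed S := hcont.preimage_isClosed_of_isClosed isClosed_Icc isClosed_Iic
  have hsS : sInf S ∈ S := hS.csInf_mem ⟨t, ⟨ht, le_rfl⟩, hwt⟩ ⟨0, fun s hs => hs.1.1⟩
  set s := sInf S
  have hs₀ : 0 ≤ s := hsS.1.1
  -- before its first zero `s`, `w` is nonnegative, hence nondecreasing
  have hmono : MonotoneOn w (Icc 0 s) := by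
    refine monotoneOn_of_hasDerivWithinAt_nonneg (f' := f) (convex_Icc 0 s)
      (hcont.mono (Icc_subset_Icc_right hsS.1.2)) (fun u hu => ?_) (fun u hu => ?_)
    all_goals rw [interior_Icc] at hu
    · exact (hw u hu.1.le).hasDerivWithinAt
    · refine hf u hu.1.le (le_of_not_ge fun hwu => ?_)
      exact hu.2.not_ge (csInf_le ⟨0, fun s hs => hs.1.1⟩ ⟨⟨hu.1.le, hu.2.le.trans hsS.1.2⟩, hwu⟩)
  have hws : w s ≤ 0 := hsS.2
  linarith [hmono ⟨le_rfl, hs₀⟩ ⟨hs₀, le_rfl⟩ hs₀]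

theorem rpow_one_sub_add_le_of_hasDerivAt {p a b : ℝ} (hp : 1 ≤ p) (hab : a ≤ b)
    {w f c F : ℝ → ℝ} (hw_cont : ContinuousOn w (Icc a b))
    (hw : ∀ t ∈ Ioo a b, HasDerivAt w (f t) t) (hw_pos : ∀ t ∈ Icc a b, 0 < w t)
    (hf : ∀ t ∈ Ioo a b, c t * w t ^ p ≤ f t)
    (hF_cont : ContinuousOn F (Icc a b)) (hF : ∀ t ∈ Ioo a b, HasDerivAt F (c t) t) :
    w b ^ (1 - p) + (p - 1) * F b ≤ w a ^ (1 - p) + (p - 1) * F a := by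
  have hanti : AntitoneOn (fun t => w t ^ (1 - p) + (p - 1) * F t) (Icc a b) := by
    refine antitoneOn_of_hasDerivWithinAt_nonpos
      (f' := fun t => f t * (1 - p) * w t ^ (1 - p - 1) + (p - 1) * c t) (convex_Icc a b)
      ((hw_cont.rpow_const fun t ht => Or.inl (hw_pos t ht).ne').add
        (continuousOn_const.mul hF_cont)) (fun t ht => ?_) (fun t ht => ?_)
    all_goals rw [interior_Icc] at ht
    · exact (((hw t ht).rpow_const (Or.inl (hw_pos t (Ioo_subset_Icc_self ht)).ne')).add
        ((hF t ht).const_mul (p - 1))).hasDerivWithinAt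
    · have hwt := hw_pos t (Ioo_subset_Icc_self ht)
      have key : c t ≤ f t * w t ^ (1 - p - 1) := calc
        c t = c t * w t ^ p * w t ^ (1 - p - 1) := by
          rw [mul_assoc, ← Real.rpow_add hwt, show p + (1 - p - 1) = 0 by ring,
            Real.rpow_zero, mul_one]
        _ ≤ f t * w t ^ (1 - p - 1) := by gcongr; exact hf t ht
      linarith [mul_le_mul_of_nonneg_left key (sub_nonneg.2 hp)]
  exact hanti ⟨le_rfl, hab⟩ ⟨hab, le_rfl⟩ hab

theorem rpow_one_sub_lt_of_rpow_neg_inv_lt {p A x : ℝ} (hp : 1 < p) (hA : 0 < A)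
    (hx : A ^ (-(1 / (p - 1))) < x) : x ^ (1 - p) < A := by
  have hp₁ : p - 1 ≠ 0 := by linarith
  calc x ^ (1 - p) < (A ^ (-(1 / (p - 1)))) ^ (1 - p) :=
        Real.rpow_lt_rpow_of_neg (Real.rpow_pos_of_pos hA _) hx (by linarith)
    _ = A := by
        rw [← Real.rpow_mul hA.le, show -(1 / (p - 1)) * (1 - p) = 1 by field_simp; ring,
          Real.rpow_one]

theorem false_of_hasDerivAt_of_mul_rpow_le {p : ℝ} (hp : 1 < p) {c w f : ℝ → ℝ}
    (hc_cont : ContinuousOn c (Ici 0)) (hc_int : IntegrableOn c (Ioi 0))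
    (hc_pos : 0 < ∫ t in Ioi (0:ℝ), c t)
    (hw : ∀ t ≥ 0, HasDerivAt w (f t) t) (hw_pos : ∀ t ≥ 0, 0 < w t)
    (hf : ∀ t ≥ 0, c t * w t ^ p ≤ f t)
    (hw₀ : ((p - 1) * ∫ t in Ioi (0:ℝ), c t) ^ (-(1 / (p - 1))) < w 0) : False := by
  set F : ℝ → ℝ := fun t => ∫ s in (0:ℝ)..t, c s
  have hlim : Tendsto (fun t => (p - 1) * F t) atTop (𝓝 ((p - 1) * ∫ t in Ioi (0:ℝ), c t)) :=
    (intervalIntegral_tendsto_integral_Ioi 0 hc_int tendsto_id).const_mul _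
  obtain ⟨T, hT, hT₀⟩ := ((hlim.eventually_const_lt (rpow_one_sub_lt_of_rpow_neg_inv_lt hp
    (mul_pos (by linarith) hc_pos) hw₀)).and (eventually_ge_atTop 0)).exists
  have hF : ∀ t ∈ Ioo 0 T, HasDerivAt F (c t) t := fun t ht =>
    intervalIntegral.integral_hasDerivAt_right
      ((hc_cont.mono Icc_subset_Ici_self).intervalIntegrable_of_Icc ht.1.le)
      ((hc_cont.mono Ioi_subset_Ici_self).stronglyMeasurableAtFilter isOpen_Ioi t ht.1)
      (hc_cont.continuousAt (Ici_mem_nhds ht.1))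
  have hF_cont : ContinuousOn F (Icc 0 T) := by
    have h := intervalIntegral.continuousOn_primitive_interval (μ := volume) (a := 0) (b := T)
      (f := c) (by rw [uIcc_of_le hT₀]; exact (hc_cont.mono Icc_subset_Ici_self).integrableOn_Icc)
    rwa [uIcc_of_le hT₀] at h
  have hle := rpow_one_sub_add_le_of_hasDerivAt hp.le hT₀
    (fun t ht => (hw t ht.1).continuousAt.continuousWithinAt)
    (fun t ht => hw t ht.1.le) (fun t ht => hw_pos t ht.1) (fun t ht => hf t ht.1.le) hF_cont hF
  have hwT : 0 < w T ^ (1 - p) := Real.rpow_pos_of_pos (hw_pos T hT₀) _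
  simp only [F, intervalIntegral.integral_same, mul_zero, add_zero] at hle hT
  linarith

/-- If `p > 1`, `l > 1`, `c₀, k₀` are continuous and nonnegative with
`0 < ∫₀^∞ c₀ < ∞` and `0 < ∫₀^∞ k₀ < ∞`, and
`w₀ > min{((p−1)∫₀^∞ c₀)^{−1/(p−1)}, ((l−1)∫₀^∞ k₀)^{−1/(l−1)}}`, then the Cauchy
problem `w′ = c₀(t)w^p + k₀(t)w^l`, `w(0) = w₀` has no global solution. -/
theorem stmt_5 (p l : ℝ) (hp : 1 < p) (hl : 1 < l) (c₀ k₀ : ℝ → ℝ)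
    (hc_cont : ContinuousOn c₀ (Ici 0)) (hc_nonneg : ∀ t ≥ (0:ℝ), 0 ≤ c₀ t)
    (hk_cont : ContinuousOn k₀ (Ici 0)) (hk_nonneg : ∀ t ≥ (0:ℝ), 0 ≤ k₀ t)
    (hc_int : IntegrableOn c₀ (Ioi 0)) (hc_pos : 0 < ∫ t in Ioi (0:ℝ), c₀ t)
    (hk_int : IntegrableOn k₀ (Ioi 0)) (hk_pos : 0 < ∫ t in Ioi (0:ℝ), k₀ t)
    (w₀ : ℝ)
    (hw₀ : w₀ > min (((p - 1) * ∫ t in Ioi (0:ℝ), c₀ t) ^ (-(1 / (p - 1)) : ℝ))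
                    (((l - 1) * ∫ t in Ioi (0:ℝ), k₀ t) ^ (-(1 / (l - 1)) : ℝ))) :
    ¬ ∃ w : ℝ → ℝ, w 0 = w₀ ∧
      ∀ t ≥ (0:ℝ), HasDerivAt w (c₀ t * w t ^ p + k₀ t * w t ^ l) t := by
  rintro ⟨w, rfl, hw⟩
  have hw₀_pos : 0 < w 0 :=
    lt_trans (lt_min (Real.rpow_pos_of_pos (mul_pos (by linarith) hc_pos) _)
      (Real.rpow_pos_of_pos (mul_pos (by linarith) hk_pos) _)) hw₀
  have hw_pos : ∀ t ≥ 0, 0 < w t := fun t ht => pos_of_hasDerivAt_of_nonneg hw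
    (fun s hs hws => by have := hc_nonneg s hs; have := hk_nonneg s hs; positivity) hw₀_pos ht
  have hc_term : ∀ t ≥ 0, 0 ≤ c₀ t * w t ^ p := fun t ht =>
    mul_nonneg (hc_nonneg t ht) (Real.rpow_nonneg (hw_pos t ht).le _)
  have hk_term : ∀ t ≥ 0, 0 ≤ k₀ t * w t ^ l := fun t ht =>
    mul_nonneg (hk_nonneg t ht) (Real.rpow_nonneg (hw_pos t ht).le _)
  rcases min_lt_iff.1 hw₀ with h | h
  · exact false_of_hasDerivAt_of_mul_rpow_le hp hc_cont hc_int hc_pos hw hw_pos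
      (fun t ht => le_add_of_nonneg_right (hk_term t ht)) h
  · exact false_of_hasDerivAt_of_mul_rpow_le hl hk_cont hk_int hk_pos hw hw_pos
      (fun t ht => le_add_of_nonneg_left (hc_term t ht)) h
end

section
/- Let p > 1, l > 1, and let c₀, k₀ : [0,∞) → ℝ be continuous and nonnegative with ∫₀^T (c₀(t) + k₀(t)) dt → ∞ as T → ∞. Then for every w₀ > 0 there is no differentiable function w : [0,∞) → ℝ with w(0) = w₀ and w′(t) = c₀(t) w(t)^p + k₀(t) w(t)^l for all t ≥ 0. -/
open MeasureTheory Set Filter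

/-!
A solution starting at `w₀ > 0` can never decrease, since its derivative is nonnegative wherever it
is positive; so `w ≥ w₀`. With `q = min p l > 1` this gives `w′ ≥ C (c₀ + k₀) w^q` for some
`C > 0`, and then `w^(1-q) + (q-1) C ∫₀^t (c₀ + k₀)` is nonincreasing. As `w^(1-q) > 0`, the
integral stays below `w₀^(1-q) / ((q-1) C)`, contradicting its divergence.
-/

section Barrier

variable {f f' : ℝ → ℝ} {a : ℝ}

theorem monotoneOn_Icc_of_hasDerivAt_of_pos (hf : ∀ t ≥ a, HasDerivAt f (f' t) t)
    (hf' : ∀ t ≥ a, 0 < f t → 0 ≤ f' t) {b : ℝ} (hpos : ∀ t ∈ Ico a b, 0 < f t) :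
    MonotoneOn f (Icc a b) := by
  refine monotoneOn_of_hasDerivWithinAt_nonneg (f' := f') (convex_Icc a b)
    (fun t ht => (hf t ht.1).continuousAt.continuousWithinAt) (fun t ht => ?_) (fun t ht => ?_)
  all_goals rw [interior_Icc] at ht
  · exact (hf t ht.1.le).hasDerivWithinAt
  · exact hf' t ht.1.le (hpos t (Ioo_subset_Ico_self ht))

theorem pos_of_hasDerivAt_nonneg_of_pos_s6 (hf : ∀ t ≥ a, HasDerivAt f (f' t) t)
    (hf' : ∀ t ≥ a, 0 < f t → 0 ≤ f' t) (ha : 0 < f a) : ∀ t ≥ a, 0 < f t := by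
  by_contra! hneg
  set S := Ici a ∩ f ⁻¹' Iic 0
  have hS : IsClosed S :=
    ContinuousOn.preimage_isClosed_of_isClosed
      (fun t ht => (hf t ht).continuousAt.continuousWithinAt) isClosed_Ici isClosed_Iic
  have hSne : S.Nonempty := hneg
  have hSbdd : BddBelow S := ⟨a, fun t ht => ht.1⟩
  obtain ⟨hab, hfb⟩ : sInf S ∈ S := hS.csInf_mem hSne hSbdd
  -- `sInf S` is the first time `f` drops to `0`; up to then `f` is nondecreasing, so `f (sInf S) ≥ f a`.
  have hbefore : ∀ t ∈ Ico a (sInf S), 0 < f t := fun t ht =>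
    lt_of_not_ge fun hft => ht.2.not_ge (csInf_le hSbdd ⟨ht.1, hft⟩)
  have := monotoneOn_Icc_of_hasDerivAt_of_pos hf hf' hbefore (left_mem_Icc.2 hab)
    (right_mem_Icc.2 hab) hab
  exact (ha.trans_le this).not_ge hfb

theorem le_of_hasDerivAt_nonneg_of_pos (hf : ∀ t ≥ a, HasDerivAt f (f' t) t)
    (hf' : ∀ t ≥ a, 0 < f t → 0 ≤ f' t) (ha : 0 < f a) : ∀ t ≥ a, f a ≤ f t := fun _ ht =>
  monotoneOn_Icc_of_hasDerivAt_of_pos hf hf'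
    (fun s hs => pos_of_hasDerivAt_nonneg_of_pos_s6 hf hf' ha s hs.1) (left_mem_Icc.2 ht)
    (right_mem_Icc.2 ht) ht

end Barrier

theorem hasDerivAt_integral_of_continuousOn_Ici {a : ℝ → ℝ} (ha : ContinuousOn a (Ici 0))
    {t : ℝ} (ht : 0 < t) : HasDerivAt (fun T => ∫ s in (0:ℝ)..T, a s) (a t) t :=
  intervalIntegral.integral_hasDerivAt_right
    ((ha.mono (by rw [uIcc_of_le ht.le]; exact Icc_subset_Ici_self)).intervalIntegrable)
    ((ha.mono Ioi_subset_Ici_self).stronglyMeasurableAtFilter isOpen_Ioi t ht)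
    (ha.continuousAt (Ici_mem_nhds ht))

theorem rpow_sub_mul_rpow_le_rpow {x₀ x q p : ℝ} (hx₀ : 0 < x₀) (hx : x₀ ≤ x) (hqp : q ≤ p) :
    x₀ ^ (p - q) * x ^ q ≤ x ^ p := by
  have hx_pos : 0 < x := hx₀.trans_le hx
  calc x₀ ^ (p - q) * x ^ q ≤ x ^ (p - q) * x ^ q := by gcongr
    _ = x ^ p := by rw [← Real.rpow_add hx_pos]; ring_nf

theorem integral_le_of_mul_rpow_le_deriv {w w' a : ℝ → ℝ} {q : ℝ} (hq : 1 < q)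
    (ha : ContinuousOn a (Ici 0)) (hw : ∀ t ≥ 0, HasDerivAt w (w' t) t)
    (hpos : ∀ t ≥ 0, 0 < w t) (hw' : ∀ t ≥ 0, a t * w t ^ q ≤ w' t) {T : ℝ} (hT : 0 ≤ T) :
    (q - 1) * ∫ t in (0:ℝ)..T, a t ≤ w 0 ^ (1 - q) := by
  set F := fun T => ∫ t in (0:ℝ)..T, a t
  set h := fun t => w t ^ (1 - q) + (q - 1) * F t
  have hF : ContinuousOn F (Icc 0 T) := by
    rw [← uIcc_of_le hT]
    exact intervalIntegral.continuousOn_primitive_interval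
      (ContinuousOn.integrableOn_uIcc (ha.mono (by rw [uIcc_of_le hT]; exact Icc_subset_Ici_self)))
  have hh : ContinuousOn h (Icc 0 T) :=
    (continuousOn_of_forall_continuousAt fun t ht =>
      (hw t ht.1).continuousAt.rpow_const (Or.inl (hpos t ht.1).ne')).add
      (continuousOn_const.mul hF)
  have hh' : ∀ t > 0, HasDerivAt h (w' t * (1 - q) * w t ^ (1 - q - 1) + (q - 1) * a t) t :=
    fun t ht => ((hw t ht.le).rpow_const (Or.inl (hpos t ht.le).ne')).add
      ((hasDerivAt_integral_of_continuousOn_Ici ha ht).const_mul (q - 1))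
  have hh'_nonpos : ∀ t > 0, w' t * (1 - q) * w t ^ (1 - q - 1) + (q - 1) * a t ≤ 0 := by
    intro t ht
    have hwq : 0 < w t ^ q := Real.rpow_pos_of_pos (hpos t ht.le) q
    have : a t ≤ w' t / w t ^ q := (le_div_iff₀ hwq).2 (hw' t ht.le)
    calc w' t * (1 - q) * w t ^ (1 - q - 1) + (q - 1) * a t
        = (q - 1) * (a t - w' t / w t ^ q) := by
          rw [show 1 - q - 1 = -q by ring, Real.rpow_neg (hpos t ht.le).le]; ring
      _ ≤ 0 := mul_nonpos_of_nonneg_of_nonpos (by linarith) (by linarith)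
  have hinterior : ∀ t ∈ interior (Icc 0 T), 0 < t := fun t ht => by
    rw [interior_Icc] at ht; exact ht.1
  have hanti : AntitoneOn h (Icc 0 T) :=
    antitoneOn_of_hasDerivWithinAt_nonpos (convex_Icc 0 T) hh
      (fun t ht => (hh' t (hinterior t ht)).hasDerivWithinAt)
      (fun t ht => hh'_nonpos t (hinterior t ht))
  have hhT : h T ≤ h 0 := hanti (left_mem_Icc.2 hT) (right_mem_Icc.2 hT) hT
  have hwT : 0 ≤ w T ^ (1 - q) := (Real.rpow_pos_of_pos (hpos T hT) _).le
  simp only [h, F, intervalIntegral.integral_same, mul_zero, add_zero] at hhT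
  linarith

/-- If `p > 1`, `l > 1`, `c₀, k₀` are continuous and nonnegative with
`∫₀^T (c₀ + k₀) → ∞` as `T → ∞`, then for every `w₀ > 0` the Cauchy problem
`w′ = c₀(t)w^p + k₀(t)w^l`, `w(0) = w₀` has no global solution. -/
theorem stmt_6 (p l : ℝ) (hp : 1 < p) (hl : 1 < l) (c₀ k₀ : ℝ → ℝ)
    (hc_cont : ContinuousOn c₀ (Ici 0)) (hc_nonneg : ∀ t ≥ (0:ℝ), 0 ≤ c₀ t)
    (hk_cont : ContinuousOn k₀ (Ici 0)) (hk_nonneg : ∀ t ≥ (0:ℝ), 0 ≤ k₀ t)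
    (hdiv : Tendsto (fun T => ∫ t in (0:ℝ)..T, (c₀ t + k₀ t)) atTop atTop) :
    ∀ w₀ : ℝ, 0 < w₀ →
      ¬ ∃ w : ℝ → ℝ, w 0 = w₀ ∧
        ∀ t ≥ (0:ℝ), HasDerivAt w (c₀ t * w t ^ p + k₀ t * w t ^ l) t := by
  rintro w₀ hw₀ ⟨w, rfl, hw⟩
  have hw_ge : ∀ t ≥ 0, w 0 ≤ w t := le_of_hasDerivAt_nonneg_of_pos hw (fun t ht hwt => by
    have := hc_nonneg t ht; have := hk_nonneg t ht; positivity) hw₀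
  set q := min p l
  set C := min (w 0 ^ (p - q)) (w 0 ^ (l - q))
  have hC : 0 < C := by positivity
  have hcomp : ∀ t ≥ 0, C * (c₀ t + k₀ t) * w t ^ q ≤ c₀ t * w t ^ p + k₀ t * w t ^ l := by
    intro t ht
    have := hc_nonneg t ht; have := hk_nonneg t ht
    have hwq : 0 ≤ w t ^ q := Real.rpow_nonneg (hw₀.le.trans (hw_ge t ht)) q
    calc C * (c₀ t + k₀ t) * w t ^ q = c₀ t * (C * w t ^ q) + k₀ t * (C * w t ^ q) := by ring
      _ ≤ c₀ t * w t ^ p + k₀ t * w t ^ l := by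
        gcongr
        · exact (mul_le_mul_of_nonneg_right (min_le_left _ _) hwq).trans
            (rpow_sub_mul_rpow_le_rpow hw₀ (hw_ge t ht) (min_le_left p l))
        · exact (mul_le_mul_of_nonneg_right (min_le_right _ _) hwq).trans
            (rpow_sub_mul_rpow_le_rpow hw₀ (hw_ge t ht) (min_le_right p l))
  obtain ⟨T, hT_large, hT⟩ := ((hdiv.const_mul_atTop hC).eventually_gt_atTop
    (w 0 ^ (1 - q) / (q - 1))).and (eventually_ge_atTop 0) |>.exists
  have hbound := integral_le_of_mul_rpow_le_deriv (a := fun t => C * (c₀ t + k₀ t)) (lt_min hp hl)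
    (continuousOn_const.mul (hc_cont.add hk_cont)) hw (fun t ht => hw₀.trans_le (hw_ge t ht))
    hcomp hT
  rw [intervalIntegral.integral_const_mul, ← le_div_iff₀' (by linarith [lt_min hp hl])] at hbound
  exact hbound.not_gt hT_large
end

section
/- Let p > 1, α > 0, and let c₀, k̄ : [0,∞) → ℝ be continuous and nonnegative with ∫₀^∞ c₀(t) dt < ∞ and (∫₀^t k̄(τ) dτ)·(∫_t^∞ c₀(τ) dτ)^{1/(p−1)} → ∞ as t → ∞. Then there is no differentiable function w : [0,∞) → ℝ with w(t) ≥ 0 for all t ≥ 0 and w′(t) ≥ c₀(t) w(t)^p + α k̄(t) for all t ≥ 0. -/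
/-!
Since `w' ≥ α k̄ ≥ 0`, `w` is nondecreasing and `w t ≥ α ∫₀ᵗ k̄`. Where `w > 0`, the function
`-w^(1-p)/(p-1)` has derivative `w' w^(-p) ≥ c₀`, and it is bounded above by `0`; integrating
from `t` to `∞` gives `∫_t^∞ c₀ ≤ w t ^ (1-p) / (p-1)`. Multiplying the two bounds, `w t` cancels:
`(∫₀ᵗ k̄) (∫_t^∞ c₀)^(1/(p-1)) ≤ 1 / (α (p-1)^(1/(p-1)))` for all large `t`, which contradicts
the assumed divergence.
-/

open MeasureTheory Set Filter

theorem monotoneOn_Ici_of_hasDerivAt_nonneg {f f' : ℝ → ℝ} {a : ℝ}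
    (hf : ∀ x ≥ a, HasDerivAt f (f' x) x) (hf' : ∀ x ≥ a, 0 ≤ f' x) :
    MonotoneOn f (Ici a) := by
  refine monotoneOn_of_hasDerivWithinAt_nonneg (f' := f') (convex_Ici a)
    (fun x hx => (hf x hx).continuousAt.continuousWithinAt) (fun x hx => ?_) (fun x hx => ?_)
  all_goals rw [interior_Ici] at hx
  exacts [(hf x (le_of_lt hx)).hasDerivWithinAt, hf' x (le_of_lt hx)]

theorem integral_le_sub_of_hasDerivAt_of_le {g g' φ : ℝ → ℝ} {a b : ℝ} (hab : a ≤ b)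
    (hg : ∀ x ∈ Icc a b, HasDerivAt g (g' x) x) (hφ : IntegrableOn φ (Icc a b))
    (hφg : ∀ x ∈ Ioo a b, φ x ≤ g' x) :
    ∫ x in a..b, φ x ≤ g b - g a :=
  intervalIntegral.integral_le_sub_of_hasDeriv_right_of_le hab
    (fun x hx => (hg x hx).continuousAt.continuousWithinAt)
    (fun x hx => (hg x (Ioo_subset_Icc_self hx)).hasDerivWithinAt) hφ hφg

theorem integral_Ioi_le_rpow_of_mul_rpow_le_deriv {c w w' : ℝ → ℝ} {p t : ℝ} (hp : 1 < p)
    (hc : IntegrableOn c (Ioi t)) (hw : ∀ s ≥ t, HasDerivAt w (w' s) s)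
    (hw_pos : ∀ s ≥ t, 0 < w s) (hcw : ∀ s ≥ t, c s * w s ^ p ≤ w' s) :
    ∫ s in Ioi t, c s ≤ w t ^ (1 - p) / (p - 1) := by
  have hp1 : 0 < p - 1 := by linarith
  have hG : ∀ s ≥ t, HasDerivAt (fun u => -w u ^ (1 - p) / (p - 1)) (w' s * w s ^ (-p)) s := by
    intro s hs
    refine (((hw s hs).rpow_const (p := 1 - p) (Or.inl (hw_pos s hs).ne')).neg.div_const
      (p - 1)).congr_deriv ?_
    rw [show 1 - p - 1 = -p by ring]
    field_simp
    ring
  have hc_le : ∀ s ≥ t, c s ≤ w' s * w s ^ (-p) := by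
    intro s hs
    have hws := hw_pos s hs
    calc c s = c s * w s ^ p * w s ^ (-p) := by
          rw [mul_assoc, ← Real.rpow_add hws, add_neg_cancel, Real.rpow_zero, mul_one]
      _ ≤ w' s * w s ^ (-p) := by gcongr; exact hcw s hs
  have hfinite : ∀ T ≥ t, ∫ s in t..T, c s ≤ w t ^ (1 - p) / (p - 1) := by
    intro T hT
    have hcT : IntegrableOn c (Icc t T) :=
      (integrableOn_Icc_iff_integrableOn_Ioc).2 (hc.mono_set Ioc_subset_Ioi_self)
    have hwT : 0 ≤ w T ^ (1 - p) / (p - 1) :=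
      div_nonneg (Real.rpow_nonneg (hw_pos T hT).le _) hp1.le
    calc ∫ s in t..T, c s ≤ -w T ^ (1 - p) / (p - 1) - -w t ^ (1 - p) / (p - 1) :=
          integral_le_sub_of_hasDerivAt_of_le hT (fun s hs => hG s hs.1) hcT
            (fun s hs => hc_le s hs.1.le)
      _ ≤ w t ^ (1 - p) / (p - 1) := by rw [neg_div, neg_div]; linarith
  exact le_of_tendsto (intervalIntegral_tendsto_integral_Ioi t hc tendsto_id)
    (eventually_atTop.2 ⟨t, hfinite⟩)

theorem mul_rpow_one_div_sub_one_le {p α w K C : ℝ} (hp : 1 < p) (hα : 0 < α) (hw : 0 < w)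
    (hK : α * K ≤ w) (hC0 : 0 ≤ C) (hC : C ≤ w ^ (1 - p) / (p - 1)) :
    K * C ^ (1 / (p - 1)) ≤ 1 / (α * (p - 1) ^ (1 / (p - 1))) := by
  have hp1 : 0 < p - 1 := by linarith
  have hpow : (w ^ (1 - p) / (p - 1)) ^ (1 / (p - 1)) = w⁻¹ / (p - 1) ^ (1 / (p - 1)) := by
    rw [Real.div_rpow (Real.rpow_nonneg hw.le _) hp1.le, ← Real.rpow_mul hw.le,
      show (1 - p) * (1 / (p - 1)) = -1 by field_simp; ring, Real.rpow_neg_one]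
  calc K * C ^ (1 / (p - 1)) ≤ (w / α) * (w⁻¹ / (p - 1) ^ (1 / (p - 1))) := by
        rw [← hpow]
        gcongr
        rwa [le_div_iff₀ hα, mul_comm]
    _ = 1 / (α * (p - 1) ^ (1 / (p - 1))) := by field_simp

theorem stmt_8_general (p α : ℝ) (hp : 1 < p) (hα : 0 < α)
    (c₀ kbar : ℝ → ℝ)
    (hc_nonneg : ∀ t ≥ (0:ℝ), 0 ≤ c₀ t)
    (hk_cont : ContinuousOn kbar (Ici 0)) (hk_nonneg : ∀ t ≥ (0:ℝ), 0 ≤ kbar t)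
    (hc_int : IntegrableOn c₀ (Ioi 0))
    (hlim : Tendsto
      (fun t => (∫ τ in (0:ℝ)..t, kbar τ) * (∫ τ in Ioi t, c₀ τ) ^ ((1:ℝ) / (p - 1)))
      atTop atTop) :
    ¬ ∃ w w' : ℝ → ℝ, (∀ t ≥ (0:ℝ), 0 ≤ w t) ∧
        (∀ t ≥ (0:ℝ), HasDerivAt w (w' t) t) ∧
        (∀ t ≥ (0:ℝ), c₀ t * w t ^ p + α * kbar t ≤ w' t) := by
  rintro ⟨w, w', hw_nonneg, hw, hw'⟩
  have hcw : ∀ t ≥ (0:ℝ), c₀ t * w t ^ p ≤ w' t := fun t ht =>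
    le_add_of_le_of_nonneg le_rfl (mul_nonneg hα.le (hk_nonneg t ht)) |>.trans (hw' t ht)
  have hkw : ∀ t ≥ (0:ℝ), α * kbar t ≤ w' t := fun t ht =>
    le_add_of_nonneg_left (mul_nonneg (hc_nonneg t ht) (Real.rpow_nonneg (hw_nonneg t ht) p))
      |>.trans (hw' t ht)
  have hmono : MonotoneOn w (Ici 0) := monotoneOn_Ici_of_hasDerivAt_nonneg hw fun t ht =>
    (mul_nonneg hα.le (hk_nonneg t ht)).trans (hkw t ht)
  have hlower : ∀ t ≥ (0:ℝ), α * ∫ τ in (0:ℝ)..t, kbar τ ≤ w t := fun t ht =>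
    calc α * ∫ τ in (0:ℝ)..t, kbar τ = ∫ τ in (0:ℝ)..t, α * kbar τ :=
          (intervalIntegral.integral_const_mul α _).symm
      _ ≤ w t - w 0 := integral_le_sub_of_hasDerivAt_of_le ht (fun s hs => hw s hs.1)
          (continuousOn_const.mul (hk_cont.mono Icc_subset_Ici_self)).integrableOn_Icc
          (fun s hs => hkw s hs.1.le)
      _ ≤ w t := sub_le_self _ (hw_nonneg 0 le_rfl)
  have hB : 0 < 1 / (α * (p - 1) ^ ((1:ℝ) / (p - 1))) :=
    one_div_pos.2 (mul_pos hα (Real.rpow_pos_of_pos (by linarith) _))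
  obtain ⟨t, ht_big, ht⟩ := ((hlim.eventually_gt_atTop _).and (eventually_gt_atTop 0)).exists
  have hC0 : 0 ≤ ∫ τ in Ioi t, c₀ τ :=
    setIntegral_nonneg measurableSet_Ioi fun s hs => hc_nonneg s (ht.trans hs).le
  have hK : 0 < ∫ τ in (0:ℝ)..t, kbar τ :=
    pos_of_mul_pos_left (hB.trans ht_big) (Real.rpow_nonneg hC0 _)
  have hwt : 0 < w t := (mul_pos hα hK).trans_le (hlower t ht.le)
  have htail := integral_Ioi_le_rpow_of_mul_rpow_le_deriv hp
    (hc_int.mono_set (Ioi_subset_Ioi ht.le)) (fun s hs => hw s (ht.le.trans hs))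
    (fun s hs => hwt.trans_le (hmono ht.le (ht.le.trans hs) hs))
    (fun s hs => hcw s (ht.le.trans hs))
  exact ht_big.not_ge (mul_rpow_one_div_sub_one_le hp hα hwt (hlower t ht.le) hC0 htail)

/-- If `p > 1`, `α > 0`, `c₀, k̄` are continuous and nonnegative on
`[0,∞)` with `∫₀^∞ c₀ < ∞` and `(∫₀^t k̄)·(∫_t^∞ c₀)^{1/(p−1)} → ∞` as `t → ∞`,
then there is no nonnegative differentiable `w` on `[0,∞)` with
`w′(t) ≥ c₀(t) w(t)^p + α k̄(t)` for all `t ≥ 0`. -/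
theorem stmt_8 (p α : ℝ) (hp : 1 < p) (hα : 0 < α)
    (c₀ kbar : ℝ → ℝ)
    (hc_cont : ContinuousOn c₀ (Ici 0)) (hc_nonneg : ∀ t ≥ (0:ℝ), 0 ≤ c₀ t)
    (hk_cont : ContinuousOn kbar (Ici 0)) (hk_nonneg : ∀ t ≥ (0:ℝ), 0 ≤ kbar t)
    (hc_int : IntegrableOn c₀ (Ioi 0))
    (hlim : Tendsto
      (fun t => (∫ τ in (0:ℝ)..t, kbar τ) * (∫ τ in Ioi t, c₀ τ) ^ ((1:ℝ) / (p - 1)))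
      atTop atTop) :
    ¬ ∃ w w' : ℝ → ℝ, (∀ t ≥ (0:ℝ), 0 ≤ w t) ∧
        (∀ t ≥ (0:ℝ), HasDerivAt w (w' t) t) ∧
        (∀ t ≥ (0:ℝ), c₀ t * w t ^ p + α * kbar t ≤ w' t) :=
  stmt_8_general p α hp hα c₀ kbar hc_nonneg hk_cont hk_nonneg hc_int hlim
end

section
/- Let g : [0,∞) → ℝ be continuous and nonnegative, let ε > 0, and let k : (0,∞) → ℝ be a measurable nonnegative function for which there exist constants 0 < c₃ ≤ c₄ and 0 < c₅ ≤ c₆ with c₃ s^{−1/2} ≤ k(s) ≤ c₄ s^{−1/2} for all s ∈ (0,ε] and c₅ ≤ k(s) ≤ c₆ for all s ≥ ε. Then sup_{t ≥ 0} ∫₀^t k(t−τ) g(τ) dτ < ∞ if and only if both ∫₀^∞ g(t) dt < ∞ and there exist positive constants t₀, α, C with α > t₀ such that ∫_{t−t₀}^t g(τ)(t−τ)^{−1/2} dτ ≤ C for all t ≥ α. -/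
/-!
The kernel `k` is bounded below by a positive constant and by `c₃ s^{-1/2}` near `0`, and above
by `c₄ s^{-1/2} + c₆` everywhere.

If the convolutions are bounded by `M`, the first lower bound gives `∫₀^t g ≤ M / c` for all `t`,
hence `g ∈ L¹(0, ∞)`, and the second one bounds the window of length `ε` by `M / c₃`.

Conversely, the upper bound reduces the convolution to
`c₄ ∫₀^t g(τ) (t - τ)^{-1/2} dτ + c₆ ∫₀^t g`. For `t ≥ α` the part of the first integral over
`τ ≤ t - t₀` is at most `t₀^{-1/2} ∫₀^∞ g` and the rest is the window; for `t ≤ α` it is at most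
`max_{[0, α]} g · ∫₀^α s^{-1/2} ds`.
-/

open MeasureTheory Set Filter

section KernelBounds

variable {k : ℝ → ℝ} {ε r c₁ c₂ : ℝ}

lemma le_rpow_add_of_le_rpow_of_le (hc₁ : 0 ≤ c₁) (hc₂ : 0 ≤ c₂)
    (hsmall : ∀ s ∈ Ioc 0 ε, k s ≤ c₁ * s ^ r) (hlarge : ∀ s ≥ ε, k s ≤ c₂)
    {s : ℝ} (hs : 0 < s) : k s ≤ c₁ * s ^ r + c₂ := by
  rcases le_or_gt s ε with h | h
  · linarith [hsmall s ⟨hs, h⟩]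
  · have : 0 ≤ c₁ * s ^ r := mul_nonneg hc₁ (Real.rpow_nonneg hs.le r)
    linarith [hlarge s h.le]

lemma exists_pos_le_of_rpow_le_of_le (hε : 0 < ε) (hr : r ≤ 0) (hc₁ : 0 < c₁) (hc₂ : 0 < c₂)
    (hsmall : ∀ s ∈ Ioc 0 ε, c₁ * s ^ r ≤ k s) (hlarge : ∀ s ≥ ε, c₂ ≤ k s) :
    ∃ c > 0, ∀ s > 0, c ≤ k s := by
  refine ⟨min (c₁ * ε ^ r) c₂, lt_min (by positivity) hc₂, fun s hs => ?_⟩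
  rcases le_or_gt s ε with h | h
  · calc min (c₁ * ε ^ r) c₂ ≤ c₁ * ε ^ r := min_le_left _ _
      _ ≤ c₁ * s ^ r := mul_le_mul_of_nonneg_left (Real.rpow_le_rpow_of_nonpos hs h hr) hc₁.le
      _ ≤ k s := hsmall s ⟨hs, h⟩
  · exact (min_le_right _ _).trans (hlarge s h.le)

lemma intervalIntegrable_of_le_rpow_add (hk : AEStronglyMeasurable k) (hr : -1 < r)
    (hk0 : ∀ s > 0, 0 ≤ k s) (hk_le : ∀ s > 0, k s ≤ c₁ * s ^ r + c₂) {T : ℝ} (hT : 0 ≤ T) :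
    IntervalIntegrable k volume 0 T := by
  refine (((intervalIntegral.intervalIntegrable_rpow' hr).const_mul c₁).add
    (intervalIntegrable_const (c := c₂))).mono_fun' hk.restrict ?_
  rw [uIoc_of_le hT]
  filter_upwards [ae_restrict_mem measurableSet_Ioc] with s hs
  rw [Real.norm_of_nonneg (hk0 s hs.1)]
  exact hk_le s hs.1

end KernelBounds

section Convolution

variable {k g : ℝ → ℝ} {r t : ℝ}

lemma IntervalIntegrable.comp_sub_left_mul (hk : IntervalIntegrable k volume 0 t)
    (hg : ContinuousOn g (uIcc 0 t)) :
    IntervalIntegrable (fun τ => k (t - τ) * g τ) volume 0 t := by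
  have hk' := hk.comp_sub_left t
  rw [sub_zero, sub_self] at hk'
  exact hk'.symm.mul_continuousOn hg

lemma intervalIntegrable_mul_sub_rpow (hr : -1 < r) (hg : ContinuousOn g (uIcc 0 t)) :
    IntervalIntegrable (fun τ => g τ * (t - τ) ^ r) volume 0 t := by
  simpa only [mul_comm] using (intervalIntegral.intervalIntegrable_rpow' hr).comp_sub_left_mul hg

lemma integrableOn_Ioi_of_conv_le {c M : ℝ} (hg : ContinuousOn g (Ici 0))
    (hg0 : ∀ τ ≥ 0, 0 ≤ g τ) (hc : 0 < c) (hck : ∀ s > 0, c ≤ k s)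
    (hconv : ∀ t ≥ 0, IntervalIntegrable (fun τ => k (t - τ) * g τ) volume 0 t)
    (hM : ∀ t ≥ 0, ∫ τ in 0..t, k (t - τ) * g τ ≤ M) :
    IntegrableOn g (Ioi 0) := by
  have hbound : ∀ t ≥ 0, ∫ τ in 0..t, g τ ≤ M / c := by
    intro t ht
    have hgt : IntervalIntegrable g volume 0 t :=
      (hg.mono fun x hx => (le_inf le_rfl ht).trans hx.1).intervalIntegrable
    rw [le_div_iff₀' hc, ← intervalIntegral.integral_const_mul]
    refine (intervalIntegral.integral_mono_on_of_le_Ioo ht (hgt.const_mul c) (hconv t ht)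
      fun τ hτ => ?_).trans (hM t ht)
    exact mul_le_mul_of_nonneg_right (hck _ (sub_pos.2 hτ.2)) (hg0 τ hτ.1.le)
  refine integrableOn_Ioi_of_intervalIntegral_norm_bounded (M / c) 0 (b := fun n : ℕ => (n : ℝ))
    (fun n => ?_) tendsto_natCast_atTop_atTop (Eventually.of_forall fun n => ?_)
  · exact (hg.mono Icc_subset_Ici_self).integrableOn_Icc.mono_set Ioc_subset_Icc_self
  · rw [intervalIntegral.integral_congr fun τ hτ => Real.norm_of_nonneg (hg0 τ ?_)]
    · exact hbound n n.cast_nonneg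
    · rw [uIcc_of_le n.cast_nonneg] at hτ
      exact hτ.1

lemma mul_window_le_conv {ε c : ℝ} (hg0 : ∀ τ ≥ 0, 0 ≤ g τ) (hε : 0 < ε)
    (hk0 : ∀ s > 0, 0 ≤ k s) (hck : ∀ s ∈ Ioc 0 ε, c * s ^ r ≤ k s)
    (hconv : IntervalIntegrable (fun τ => k (t - τ) * g τ) volume 0 t)
    (hW : IntervalIntegrable (fun τ => g τ * (t - τ) ^ r) volume 0 t) (ht : ε ≤ t) :
    c * ∫ τ in (t - ε)..t, g τ * (t - τ) ^ r ≤ ∫ τ in 0..t, k (t - τ) * g τ := by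
  have hmid : t - ε ∈ uIcc 0 t := mem_uIcc_of_le (by linarith) (by linarith)
  have hconv_near := hconv.mono_set (uIcc_subset_uIcc hmid right_mem_uIcc)
  have hfar : 0 ≤ ∫ τ in 0..(t - ε), k (t - τ) * g τ :=
    intervalIntegral.integral_nonneg (by linarith) fun τ hτ =>
      mul_nonneg (hk0 _ (by linarith [hτ.2])) (hg0 τ hτ.1)
  rw [← intervalIntegral.integral_add_adjacent_intervals
      (hconv.mono_set (uIcc_subset_uIcc left_mem_uIcc hmid)) hconv_near,
    ← intervalIntegral.integral_const_mul]
  refine le_add_of_nonneg_of_le hfar (intervalIntegral.integral_mono_on_of_le_Ioo (by linarith)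
    ((hW.mono_set (uIcc_subset_uIcc hmid right_mem_uIcc)).const_mul c) hconv_near
    fun τ hτ => ?_)
  have := mul_le_mul_of_nonneg_right
    (hck (t - τ) ⟨sub_pos.2 hτ.2, by linarith [hτ.1]⟩) (hg0 τ (by linarith [hτ.1]))
  linarith

lemma conv_le_rpow_conv_add {c₁ c₂ : ℝ} (hg0 : ∀ τ ≥ 0, 0 ≤ g τ)
    (hk_le : ∀ s > 0, k s ≤ c₁ * s ^ r + c₂)
    (hconv : IntervalIntegrable (fun τ => k (t - τ) * g τ) volume 0 t)
    (hW : IntervalIntegrable (fun τ => g τ * (t - τ) ^ r) volume 0 t)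
    (hG : IntervalIntegrable g volume 0 t) (ht : 0 ≤ t) :
    ∫ τ in 0..t, k (t - τ) * g τ ≤
      c₁ * (∫ τ in 0..t, g τ * (t - τ) ^ r) + c₂ * ∫ τ in 0..t, g τ := by
  rw [← intervalIntegral.integral_const_mul, ← intervalIntegral.integral_const_mul,
    ← intervalIntegral.integral_add (hW.const_mul c₁) (hG.const_mul c₂)]
  refine intervalIntegral.integral_mono_on_of_le_Ioo ht hconv
    ((hW.const_mul c₁).add (hG.const_mul c₂)) fun τ hτ => ?_
  have := mul_le_mul_of_nonneg_right (hk_le _ (sub_pos.2 hτ.2)) (hg0 τ hτ.1.le)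
  linarith

lemma rpow_conv_le_of_window {t₀ : ℝ} (hr : r ≤ 0) (hg0 : ∀ τ ≥ 0, 0 ≤ g τ)
    (hW : IntervalIntegrable (fun τ => g τ * (t - τ) ^ r) volume 0 t)
    (hG : IntervalIntegrable g volume 0 t) (ht₀ : 0 < t₀) (ht₀t : t₀ ≤ t) :
    ∫ τ in 0..t, g τ * (t - τ) ^ r ≤
      t₀ ^ r * (∫ τ in 0..(t - t₀), g τ) + ∫ τ in (t - t₀)..t, g τ * (t - τ) ^ r := by
  have hmid : t - t₀ ∈ uIcc 0 t := mem_uIcc_of_le (by linarith) (by linarith)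
  rw [← intervalIntegral.integral_add_adjacent_intervals
      (hW.mono_set (uIcc_subset_uIcc left_mem_uIcc hmid))
      (hW.mono_set (uIcc_subset_uIcc hmid right_mem_uIcc)),
    ← intervalIntegral.integral_const_mul]
  gcongr
  refine intervalIntegral.integral_mono_on_of_le_Ioo (by linarith)
    (hW.mono_set (uIcc_subset_uIcc left_mem_uIcc hmid))
    ((hG.mono_set (uIcc_subset_uIcc left_mem_uIcc hmid)).const_mul _) fun τ hτ => ?_
  rw [mul_comm]
  exact mul_le_mul_of_nonneg_right
    (Real.rpow_le_rpow_of_nonpos ht₀ (by linarith [hτ.2]) hr) (hg0 τ hτ.1.le)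

lemma exists_rpow_conv_le_on_Icc {α : ℝ} (hr : -1 < r) (hg : ContinuousOn g (Icc 0 α))
    (hα : 0 ≤ α) : ∃ B, ∀ t ∈ Icc 0 α, ∫ τ in 0..t, g τ * (t - τ) ^ r ≤ B := by
  obtain ⟨C, hC⟩ := isCompact_Icc.exists_bound_of_continuousOn hg
  have hC0 : 0 ≤ C := (norm_nonneg _).trans (hC 0 ⟨le_rfl, hα⟩)
  have hr1 : 0 < r + 1 := by linarith
  refine ⟨C * (α ^ (r + 1) / (r + 1)), fun t ht => ?_⟩
  have hgt : ContinuousOn g (uIcc 0 t) := by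
    rw [uIcc_of_le ht.1]
    exact hg.mono (Icc_subset_Icc_right ht.2)
  calc ∫ τ in 0..t, g τ * (t - τ) ^ r
      ≤ ∫ τ in 0..t, C * (t - τ) ^ r := by
        refine intervalIntegral.integral_mono_on_of_le_Ioo ht.1
          (intervalIntegrable_mul_sub_rpow hr hgt)
          (intervalIntegrable_mul_sub_rpow hr continuousOn_const) fun τ hτ => ?_
        exact mul_le_mul_of_nonneg_right
          ((Real.le_norm_self _).trans (hC τ ⟨hτ.1.le, hτ.2.le.trans ht.2⟩))
          (Real.rpow_nonneg (sub_nonneg.2 hτ.2.le) _)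
    _ = C * (t ^ (r + 1) / (r + 1)) := by
        rw [intervalIntegral.integral_const_mul,
          intervalIntegral.integral_comp_sub_left (fun s => s ^ r), sub_self, sub_zero,
          integral_rpow (Or.inl hr), Real.zero_rpow hr1.ne', sub_zero]
    _ ≤ C * (α ^ (r + 1) / (r + 1)) := by
        have := Real.rpow_le_rpow ht.1 ht.2 hr1.le
        gcongr

lemma intervalIntegral_le_integral_Ioi (hg0 : ∀ τ ≥ 0, 0 ≤ g τ) (hint : IntegrableOn g (Ioi 0))
    (ht : 0 ≤ t) : ∫ τ in 0..t, g τ ≤ ∫ τ in Ioi 0, g τ := by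
  rw [intervalIntegral.integral_of_le ht]
  exact setIntegral_mono_set hint
    ((ae_restrict_iff' measurableSet_Ioi).2 (ae_of_all _ fun τ hτ => hg0 τ hτ.le))
    Ioc_subset_Ioi_self.eventuallyLE

lemma exists_rpow_conv_le_of_window {t₀ α C : ℝ} (hr : -1 < r) (hr0 : r ≤ 0)
    (hg : ContinuousOn g (Ici 0)) (hg0 : ∀ τ ≥ 0, 0 ≤ g τ) (hint : IntegrableOn g (Ioi 0))
    (ht₀ : 0 < t₀) (ht₀α : t₀ ≤ α) (hwin : ∀ t ≥ α, ∫ τ in (t - t₀)..t, g τ * (t - τ) ^ r ≤ C) :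
    ∃ B, ∀ t ≥ 0, ∫ τ in 0..t, g τ * (t - τ) ^ r ≤ B := by
  obtain ⟨B, hB⟩ := exists_rpow_conv_le_on_Icc hr (hg.mono Icc_subset_Ici_self)
    (ht₀.le.trans ht₀α)
  refine ⟨max B (t₀ ^ r * (∫ τ in Ioi 0, g τ) + C), fun t ht => ?_⟩
  have hgt : ContinuousOn g (uIcc 0 t) := hg.mono fun x hx => (le_inf le_rfl ht).trans hx.1
  rcases le_or_gt t α with htα | htα
  · exact (hB t ⟨ht, htα⟩).trans (le_max_left _ _)
  · refine (rpow_conv_le_of_window hr0 hg0 (intervalIntegrable_mul_sub_rpow hr hgt)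
      hgt.intervalIntegrable ht₀ (by linarith)).trans (le_trans ?_ (le_max_right _ _))
    gcongr
    exacts [intervalIntegral_le_integral_Ioi hg0 hint (by linarith), hwin t htα.le]

end Convolution

/-- For a continuous nonnegative `g` on `[0,∞)` and a measurable
nonnegative kernel `k` on `(0,∞)` comparable to `s^{-1/2}` near `0` and to a
constant away from `0`, the convolutions `∫₀^t k(t−τ) g(τ) dτ` are uniformly
bounded in `t ≥ 0` iff `∫₀^∞ g < ∞` and the windowed integrals
`∫_{t−t₀}^t g(τ)(t−τ)^{−1/2} dτ` are uniformly bounded for large `t`. -/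
theorem stmt_9 (g : ℝ → ℝ) (hg_cont : ContinuousOn g (Ici 0))
    (hg_nonneg : ∀ t ≥ (0:ℝ), 0 ≤ g t)
    (ε : ℝ) (hε : 0 < ε) (k : ℝ → ℝ) (hk_meas : Measurable k)
    (hk_nonneg : ∀ s > (0:ℝ), 0 ≤ k s)
    (c₃ c₄ c₅ c₆ : ℝ) (hc₃ : 0 < c₃) (hc₃₄ : c₃ ≤ c₄) (hc₅ : 0 < c₅) (hc₅₆ : c₅ ≤ c₆)
    (hk_small : ∀ s ∈ Ioc (0:ℝ) ε,
      c₃ * s ^ (-(1/2) : ℝ) ≤ k s ∧ k s ≤ c₄ * s ^ (-(1/2) : ℝ))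
    (hk_large : ∀ s ≥ ε, c₅ ≤ k s ∧ k s ≤ c₆) :
    (∃ M : ℝ, ∀ t ≥ (0:ℝ), (∫ τ in (0:ℝ)..t, k (t - τ) * g τ) ≤ M) ↔
      (IntegrableOn g (Ioi 0) ∧
        ∃ t₀ α C : ℝ, 0 < t₀ ∧ t₀ < α ∧ 0 < C ∧
          ∀ t ≥ α, (∫ τ in (t - t₀)..t, g τ * (t - τ) ^ (-(1/2) : ℝ)) ≤ C) := by
  have hr : (-1 : ℝ) < -(1/2) := by norm_num
  have hc₄ : 0 ≤ c₄ := hc₃.le.trans hc₃₄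
  have hc₆ : 0 ≤ c₆ := hc₅.le.trans hc₅₆
  have hg_uIcc : ∀ t ≥ (0:ℝ), ContinuousOn g (uIcc 0 t) := fun t ht =>
    hg_cont.mono fun x hx => (le_inf le_rfl ht).trans hx.1
  have hk_le : ∀ s > 0, k s ≤ c₄ * s ^ (-(1/2) : ℝ) + c₆ := fun s hs =>
    le_rpow_add_of_le_rpow_of_le hc₄ hc₆ (fun s hs => (hk_small s hs).2)
      (fun s hs => (hk_large s hs).2) hs
  have hconv : ∀ t ≥ (0:ℝ), IntervalIntegrable (fun τ => k (t - τ) * g τ) volume 0 t :=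
    fun t ht => (intervalIntegrable_of_le_rpow_add hk_meas.aestronglyMeasurable hr hk_nonneg
      hk_le ht).comp_sub_left_mul (hg_uIcc t ht)
  have hW : ∀ t ≥ (0:ℝ), IntervalIntegrable (fun τ => g τ * (t - τ) ^ (-(1/2) : ℝ)) volume 0 t :=
    fun t ht => intervalIntegrable_mul_sub_rpow hr (hg_uIcc t ht)
  constructor
  · rintro ⟨M, hM⟩
    obtain ⟨c, hc, hck⟩ := exists_pos_le_of_rpow_le_of_le hε (by norm_num) hc₃ hc₅
      (fun s hs => (hk_small s hs).1) (fun s hs => (hk_large s hs).1)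
    have hM0 : 0 ≤ M := by simpa using hM 0 le_rfl
    refine ⟨integrableOn_Ioi_of_conv_le hg_cont hg_nonneg hc hck hconv hM,
      ε, ε + 1, M / c₃ + 1, hε, by linarith, by positivity, fun t ht => ?_⟩
    have ht0 : 0 ≤ t := by linarith
    have := (mul_window_le_conv hg_nonneg hε hk_nonneg (fun s hs => (hk_small s hs).1)
      (hconv t ht0) (hW t ht0) (by linarith)).trans (hM t ht0)
    linarith [(le_div_iff₀' hc₃).2 this]
  · rintro ⟨hint, t₀, α, C, ht₀, ht₀α, -, hwin⟩
    obtain ⟨B, hB⟩ := exists_rpow_conv_le_of_window hr (by norm_num) hg_cont hg_nonneg hint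
      ht₀ ht₀α.le hwin
    refine ⟨c₄ * B + c₆ * ∫ τ in Ioi 0, g τ, fun t ht => ?_⟩
    calc ∫ τ in 0..t, k (t - τ) * g τ
        ≤ c₄ * (∫ τ in 0..t, g τ * (t - τ) ^ (-(1/2) : ℝ)) + c₆ * ∫ τ in 0..t, g τ :=
          conv_le_rpow_conv_add hg_nonneg hk_le (hconv t ht) (hW t ht)
            (hg_uIcc t ht).intervalIntegrable ht
      _ ≤ _ := by
          gcongr
          exacts [hB t ht, intervalIntegral_le_integral_Ioi hg_nonneg hint ht]
end

section
/- There exists a continuous nonnegative function g : [0,∞) → ℝ such that ∫₀^∞ g(t) dt < ∞ and there is a constant C > 0 with ∫_{t−1}^t g(τ)² dτ ≤ C for all t ≥ 1, and yet the function t ↦ ∫_{t−1}^t g(τ)(t−τ)^{−1/2} dτ is unbounded on [1,∞), i.e. sup_{t ≥ 1} ∫_{t−1}^t g(τ)(t−τ)^{−1/2} dτ = ∞. -/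
open MeasureTheory Set Filter Topology

noncomputable def ee (n : ℤ) : ℝ := Real.exp (-(4:ℝ)^n)
noncomputable def cc (n : ℤ) : ℝ := (2:ℝ)^(-n)
noncomputable def FF (n : ℤ) (τ : ℝ) : ℝ :=
  cc n * (Real.sqrt ((n:ℝ)+1-τ) * (τ-(n:ℝ)) / (((n:ℝ)+1-τ) + ee n))
noncomputable def gg (τ : ℝ) : ℝ := FF ⌊τ⌋ τ

lemma ee_pos (n : ℤ) : 0 < ee n := Real.exp_pos _
lemma ee_le_one (n : ℤ) : ee n ≤ 1 := by
  rw [ee, Real.exp_le_one_iff, neg_nonpos]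
  positivity
lemma cc_pos (n : ℤ) : 0 < cc n := by
  rw [cc]; positivity
lemma log_ee (n : ℤ) : Real.log (ee n) = -(4:ℝ)^n := Real.log_exp _

lemma FF_nonneg (n : ℤ) (τ : ℝ) (h1 : (n:ℝ) ≤ τ) (h2 : τ < (n:ℝ)+1) : 0 ≤ FF n τ := by
  have he := ee_pos n
  have hd : (0:ℝ) < ((n:ℝ)+1-τ) + ee n := by linarith
  have hc := (cc_pos n).le
  have hs : (0:ℝ) ≤ Real.sqrt ((n:ℝ)+1-τ) := Real.sqrt_nonneg _
  have ht : (0:ℝ) ≤ τ-(n:ℝ) := by linarith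
  exact mul_nonneg hc (div_nonneg (mul_nonneg hs ht) hd.le)

lemma gg_nonneg (τ : ℝ) : 0 ≤ gg τ :=
  FF_nonneg _ _ (Int.floor_le τ) (Int.lt_floor_add_one τ)

lemma gg_eq (n : ℤ) (τ : ℝ) (h1 : (n:ℝ) ≤ τ) (h2 : τ < (n:ℝ)+1) : gg τ = FF n τ := by
  rw [gg, Int.floor_eq_iff.2 ⟨h1, h2⟩]

lemma FF_contAt (n : ℤ) (x : ℝ) (hx : ((n:ℝ)+1-x) + ee n ≠ 0) : ContinuousAt (FF n) x := by
  have h1 : Continuous fun τ:ℝ => ((n:ℝ)+1-τ) + ee n := by continuity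
  have h2 : Continuous fun τ:ℝ => Real.sqrt ((n:ℝ)+1-τ) * (τ-(n:ℝ)) :=
    (Real.continuous_sqrt.comp (by continuity)).mul (by continuity)
  exact continuousAt_const.mul (h2.continuousAt.div h1.continuousAt hx)

lemma gg_int (m : ℤ) : gg (m:ℝ) = 0 := by
  have : gg (m:ℝ) = FF m (m:ℝ) := gg_eq m _ le_rfl (by linarith)
  rw [this, FF]
  simp

lemma gg_cont : Continuous gg := by
  rw [continuous_iff_continuousAt]
  intro x
  by_cases hx : (⌊x⌋:ℝ) = x
  · -- integer point
    set m := ⌊x⌋ with hm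
    have hgx : gg x = 0 := by rw [← hx]; exact gg_int m
    rw [ContinuousAt, hgx]
    set B := cc (m-1)/ee (m-1) + 2*cc m with hB
    have hBpos : 0 < B := by
      have u1 := cc_pos (m-1); have u2 := ee_pos (m-1); have u3 := cc_pos m
      have u4 : 0 < cc (m-1)/ee (m-1) := by positivity
      rw [hB]; linarith
    have hbound : ∀ τ ∈ Ioo (x - 1/2) (x + 1/2), gg τ ≤ B * Real.sqrt |τ - x| := by
      rintro τ ⟨hτ1, hτ2⟩
      rcases lt_or_ge τ x with h | h
      · -- left side, floor = m - 1
        have hfl : gg τ = FF (m-1) τ := by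
          apply gg_eq <;> push_cast <;> [linarith [hx]; linarith [hx]]
        rw [hfl, FF]
        have he := ee_pos (m-1)
        have hden : ee (m-1) ≤ (((m-1:ℤ):ℝ)+1-τ) + ee (m-1) := by
          push_cast; linarith [hx]
        have hfac : τ - ((m-1:ℤ):ℝ) ≤ 1 := by push_cast; linarith [hx]
        have hfacpos : 0 ≤ τ - ((m-1:ℤ):ℝ) := by push_cast; linarith [hx]
        have hsq : Real.sqrt (((m-1:ℤ):ℝ)+1-τ) = Real.sqrt |τ - x| := by
          rw [abs_of_neg (by linarith)]
          congr 1; push_cast; linarith [hx]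
        rw [hsq]
        have hs0 : (0:ℝ) ≤ Real.sqrt |τ - x| := Real.sqrt_nonneg _
        have key : Real.sqrt |τ - x| * (τ - ((m-1:ℤ):ℝ)) / ((((m-1:ℤ):ℝ)+1-τ) + ee (m-1))
            ≤ Real.sqrt |τ - x| / ee (m-1) := by
          apply div_le_div₀ (by positivity) _ he hden
          exact mul_le_of_le_one_right hs0 hfac
        calc cc (m-1) * (Real.sqrt |τ - x| * (τ - ((m-1:ℤ):ℝ)) / ((((m-1:ℤ):ℝ)+1-τ) + ee (m-1)))
            ≤ cc (m-1) * (Real.sqrt |τ - x| / ee (m-1)) :=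
              mul_le_mul_of_nonneg_left key (cc_pos (m-1)).le
          _ = (cc (m-1)/ee (m-1)) * Real.sqrt |τ - x| := by ring
          _ ≤ B * Real.sqrt |τ - x| := by
              apply mul_le_mul_of_nonneg_right _ hs0
              have := cc_pos m
              rw [hB]; linarith
      · -- right side, floor = m
        have hfl : gg τ = FF m τ := by
          apply gg_eq <;> [linarith [hx]; linarith [hx]]
        rw [hfl, FF]
        have he := ee_pos m
        have hub : τ - (m:ℝ) < 1/2 := by linarith [hx]
        have hlb : 0 ≤ τ - (m:ℝ) := by linarith [hx]
        have hden : (1:ℝ)/2 ≤ ((m:ℝ)+1-τ) + ee m := by linarith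
        have hsq1 : Real.sqrt ((m:ℝ)+1-τ) ≤ 1 := by
          have := Real.sqrt_le_sqrt (show (m:ℝ)+1-τ ≤ 1 by linarith)
          simpa using this
        have hsqabs : Real.sqrt |τ - x| = Real.sqrt (τ - (m:ℝ)) := by
          rw [abs_of_nonneg (by linarith)]; congr 1; linarith [hx]
        have key : Real.sqrt ((m:ℝ)+1-τ) * (τ-(m:ℝ)) / (((m:ℝ)+1-τ) + ee m)
            ≤ 2 * (τ - (m:ℝ)) := by
          rw [div_le_iff₀ (by linarith)]
          have h1 : Real.sqrt ((m:ℝ)+1-τ) * (τ-(m:ℝ)) ≤ τ - (m:ℝ) :=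
            mul_le_of_le_one_left hlb hsq1
          nlinarith [hlb]
        have hts : τ - (m:ℝ) ≤ Real.sqrt (τ - (m:ℝ)) := by
          nlinarith [Real.sq_sqrt hlb, Real.sqrt_nonneg (τ - (m:ℝ)),
            Real.sqrt_le_sqrt (show τ - (m:ℝ) ≤ 1 by linarith)]
        calc cc m * (Real.sqrt ((m:ℝ)+1-τ) * (τ-(m:ℝ)) / (((m:ℝ)+1-τ) + ee m))
            ≤ cc m * (2 * (τ - (m:ℝ))) := mul_le_mul_of_nonneg_left key (cc_pos m).le
          _ = 2 * cc m * (τ - (m:ℝ)) := by ring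
          _ ≤ 2 * cc m * Real.sqrt (τ - (m:ℝ)) := by
              apply mul_le_mul_of_nonneg_left hts
              have := cc_pos m; positivity
          _ = 2 * cc m * Real.sqrt |τ - x| := by rw [hsqabs]
          _ ≤ B * Real.sqrt |τ - x| := by
              apply mul_le_mul_of_nonneg_right _ (Real.sqrt_nonneg _)
              have h1 : 0 < cc (m-1)/ee (m-1) := by
                have := cc_pos (m-1); have := ee_pos (m-1); positivity
              rw [hB]; linarith
    have htend : Tendsto (fun τ => B * Real.sqrt |τ - x|) (𝓝 x) (𝓝 0) := by
      have : Continuous fun τ:ℝ => B * Real.sqrt |τ - x| := by continuity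
      have h0 : B * Real.sqrt |x - x| = 0 := by simp
      have := this.continuousAt (x := x)
      rw [ContinuousAt] at this
      rwa [h0] at this
    apply squeeze_zero' _ _ htend
    · filter_upwards with τ using gg_nonneg τ
    · filter_upwards [Ioo_mem_nhds (by linarith : x - 1/2 < x) (by linarith : x < x + 1/2)]
        with τ hτ using hbound τ hτ
  · -- non-integer point
    have h1 : (⌊x⌋:ℝ) < x := lt_of_le_of_ne (Int.floor_le x) hx
    have h2 : x < (⌊x⌋:ℝ) + 1 := Int.lt_floor_add_one x
    have heq : ∀ᶠ τ in 𝓝 x, FF ⌊x⌋ τ = gg τ := by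
      filter_upwards [Ioo_mem_nhds h1 h2] with τ hτ
      exact (gg_eq ⌊x⌋ τ hτ.1.le hτ.2).symm
    have hden : ((⌊x⌋:ℝ)+1-x) + ee ⌊x⌋ ≠ 0 := by
      have := ee_pos ⌊x⌋; exact ne_of_gt (by linarith)
    exact (FF_contAt ⌊x⌋ x hden).congr heq

lemma gg_intble (a b : ℝ) : IntervalIntegrable gg volume a b :=
  gg_cont.intervalIntegrable a b

lemma mass_le (n : ℤ) : ∫ τ in (n:ℝ)..((n:ℝ)+1), gg τ ≤ 3 * cc n := by
  have he := ee_pos n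
  have hc := cc_pos n
  set h : ℝ → ℝ := fun τ => cc n / Real.sqrt (((n:ℝ)+1-τ) + ee n) with hh
  have hcont : ContinuousOn h (Icc (n:ℝ) ((n:ℝ)+1)) := by
    apply ContinuousOn.div continuousOn_const
    · exact (Real.continuous_sqrt.comp (by continuity)).continuousOn
    · intro τ hτ
      have : (0:ℝ) < ((n:ℝ)+1-τ) + ee n := by
        rcases hτ with ⟨h1, h2⟩; linarith
      positivity
  have hcont' : ContinuousOn h (uIcc (n:ℝ) ((n:ℝ)+1)) := by
    rw [uIcc_of_le (by linarith : (n:ℝ) ≤ (n:ℝ)+1)]; exact hcont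
  have hint : IntervalIntegrable h volume (n:ℝ) ((n:ℝ)+1) := hcont'.intervalIntegrable
  have hle : ∀ τ ∈ Icc (n:ℝ) ((n:ℝ)+1), gg τ ≤ h τ := by
    rintro τ ⟨h1, h2⟩
    rcases eq_or_lt_of_le h2 with rfl | h2'
    · -- endpoint τ = n+1
      have : gg ((n:ℝ)+1) = 0 := by
        have : ((n:ℝ)+1) = ((n+1:ℤ):ℝ) := by push_cast; ring
        rw [this, gg_int]
      rw [this, hh]
      have hpos : (0:ℝ) < ((n:ℝ)+1-((n:ℝ)+1)) + ee n := by simpa using he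
      positivity
    · rw [gg_eq n τ h1 h2', FF, hh]
      have hs : (0:ℝ) ≤ (n:ℝ)+1-τ := by linarith
      have hd : (0:ℝ) < ((n:ℝ)+1-τ) + ee n := by linarith
      have key : Real.sqrt ((n:ℝ)+1-τ) * (τ-(n:ℝ)) / (((n:ℝ)+1-τ) + ee n)
          ≤ 1 / Real.sqrt (((n:ℝ)+1-τ) + ee n) := by
        rw [← Real.sqrt_div_self']
        apply div_le_div₀ (Real.sqrt_nonneg _) _ hd le_rfl
        calc Real.sqrt ((n:ℝ)+1-τ) * (τ-(n:ℝ)) ≤ Real.sqrt ((n:ℝ)+1-τ) * 1 :=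
              mul_le_mul_of_nonneg_left (by linarith) (Real.sqrt_nonneg _)
          _ = Real.sqrt ((n:ℝ)+1-τ) := mul_one _
          _ ≤ Real.sqrt (((n:ℝ)+1-τ) + ee n) := Real.sqrt_le_sqrt (by linarith)
      calc cc n * (Real.sqrt ((n:ℝ)+1-τ) * (τ-(n:ℝ)) / (((n:ℝ)+1-τ) + ee n))
          ≤ cc n * (1 / Real.sqrt (((n:ℝ)+1-τ) + ee n)) :=
            mul_le_mul_of_nonneg_left key hc.le
        _ = cc n / Real.sqrt (((n:ℝ)+1-τ) + ee n) := by ring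
  have hmono : ∫ τ in (n:ℝ)..((n:ℝ)+1), gg τ ≤ ∫ τ in (n:ℝ)..((n:ℝ)+1), h τ :=
    intervalIntegral.integral_mono_on (by linarith) (gg_intble _ _) hint hle
  -- compute ∫ h via FTC
  have hftc : ∫ τ in (n:ℝ)..((n:ℝ)+1), h τ
      = (-(2*cc n) * Real.sqrt (ee n)) - (-(2*cc n) * Real.sqrt (1 + ee n)) := by
    have hderiv : ∀ τ ∈ uIcc (n:ℝ) ((n:ℝ)+1),
        HasDerivAt (fun τ => -(2*cc n) * Real.sqrt (((n:ℝ)+1-τ) + ee n)) (h τ) τ := by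
      intro τ hτ
      rw [uIcc_of_le (by linarith)] at hτ
      rcases hτ with ⟨h1, h2⟩
      have hd : (0:ℝ) < ((n:ℝ)+1-τ) + ee n := by linarith
      have hu : HasDerivAt (fun τ:ℝ => ((n:ℝ)+1-τ) + ee n) (-1) τ := by
        simpa using (((hasDerivAt_id τ).const_sub ((n:ℝ)+1)).add_const (ee n))
      have := (hu.sqrt hd.ne').const_mul (-(2*cc n))
      refine this.congr_deriv ?_
      rw [hh]
      field_simp
    have heq := intervalIntegral.integral_eq_sub_of_hasDerivAt hderiv hint
    rw [heq]
    norm_num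
  rw [hftc] at hmono
  have h1 : Real.sqrt (1 + ee n) ≤ 3/2 := by
    have h2 : Real.sqrt (1 + ee n) ≤ Real.sqrt 2 := Real.sqrt_le_sqrt (by linarith [ee_le_one n])
    nlinarith [Real.sq_sqrt (show (0:ℝ) ≤ 2 by norm_num), Real.sqrt_nonneg 2]
  nlinarith [Real.sqrt_nonneg (ee n), hmono]

lemma cc_sq_mul (n : ℤ) : cc n^2 * (4:ℝ)^n = 1 := by
  have h4 : (4:ℝ) = (2:ℝ)^(2:ℤ) := by norm_num
  rw [cc, h4, ← zpow_natCast ((2:ℝ)^(-n)) 2, ← zpow_mul, ← zpow_mul, ← zpow_add₀ (two_ne_zero)]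
  rw [show -n * ((2:ℕ):ℤ) + 2 * n = 0 by push_cast; ring, zpow_zero]

lemma cc_sq_le_one (n : ℤ) (hn : 0 ≤ n) : cc n^2 ≤ 1 := by
  have : cc n ≤ 1 := by
    rw [cc]
    apply zpow_le_one_of_nonpos₀ (by norm_num) (by linarith)
  nlinarith [cc_pos n]

lemma lsq_le (n : ℤ) (hn : 0 ≤ n) : ∫ τ in (n:ℝ)..((n:ℝ)+1), (gg τ)^2 ≤ 2 := by
  have he := ee_pos n
  have hc := cc_pos n
  set h : ℝ → ℝ := fun τ => cc n^2 / (((n:ℝ)+1-τ) + ee n) with hh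
  have hcont : ContinuousOn h (uIcc (n:ℝ) ((n:ℝ)+1)) := by
    rw [uIcc_of_le (by linarith : (n:ℝ) ≤ (n:ℝ)+1)]
    apply ContinuousOn.div continuousOn_const (Continuous.continuousOn (by continuity))
    intro τ hτ
    rcases hτ with ⟨h1, h2⟩
    exact ne_of_gt (by linarith)
  have hint : IntervalIntegrable h volume (n:ℝ) ((n:ℝ)+1) := hcont.intervalIntegrable
  have hle : ∀ τ ∈ Icc (n:ℝ) ((n:ℝ)+1), (gg τ)^2 ≤ h τ := by
    rintro τ ⟨h1, h2⟩
    rcases eq_or_lt_of_le h2 with rfl | h2'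
    · have hz : gg ((n:ℝ)+1) = 0 := by
        have : ((n:ℝ)+1) = ((n+1:ℤ):ℝ) := by push_cast; ring
        rw [this, gg_int]
      rw [hz]
      have hpos : (0:ℝ) ≤ ((n:ℝ)+1-((n:ℝ)+1)) + ee n := by linarith
      have : (0:ℝ)^2 = 0 := by norm_num
      rw [this]
      exact div_nonneg (sq_nonneg _) hpos
    · rw [gg_eq n τ h1 h2', FF, hh]
      have hs : (0:ℝ) ≤ (n:ℝ)+1-τ := by linarith
      have hd : (0:ℝ) < ((n:ℝ)+1-τ) + ee n := by linarith
      have hsq : (Real.sqrt ((n:ℝ)+1-τ))^2 = (n:ℝ)+1-τ := Real.sq_sqrt hs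
      have hf1 : (0:ℝ) ≤ τ-(n:ℝ) := by linarith
      have hf2 : τ-(n:ℝ) ≤ 1 := by linarith
      have key : (Real.sqrt ((n:ℝ)+1-τ) * (τ-(n:ℝ)) / (((n:ℝ)+1-τ) + ee n))^2
          ≤ 1 / (((n:ℝ)+1-τ) + ee n) := by
        rw [div_pow, div_le_div_iff₀ (by positivity) hd]
        rw [mul_pow, hsq]
        have e1 : (τ-(n:ℝ))^2 ≤ 1 := by nlinarith
        have e3 : ((n:ℝ)+1-τ)*(τ-(n:ℝ))^2 ≤ ((n:ℝ)+1-τ+ee n) := by nlinarith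
        nlinarith [mul_le_mul_of_nonneg_right e3 hd.le]
      calc (cc n * (Real.sqrt ((n:ℝ)+1-τ) * (τ-(n:ℝ)) / (((n:ℝ)+1-τ) + ee n)))^2
          = cc n^2 * (Real.sqrt ((n:ℝ)+1-τ) * (τ-(n:ℝ)) / (((n:ℝ)+1-τ) + ee n))^2 := by ring
        _ ≤ cc n^2 * (1 / (((n:ℝ)+1-τ) + ee n)) := by
            apply mul_le_mul_of_nonneg_left key (by positivity)
        _ = h τ := by rw [hh]; ring
  have hmono : ∫ τ in (n:ℝ)..((n:ℝ)+1), (gg τ)^2 ≤ ∫ τ in (n:ℝ)..((n:ℝ)+1), h τ :=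
    intervalIntegral.integral_mono_on (by linarith)
      ((gg_cont.pow 2).intervalIntegrable _ _) hint hle
  have hftc : ∫ τ in (n:ℝ)..((n:ℝ)+1), h τ
      = (-(cc n^2) * Real.log (ee n)) - (-(cc n^2) * Real.log (1 + ee n)) := by
    have hderiv : ∀ τ ∈ uIcc (n:ℝ) ((n:ℝ)+1),
        HasDerivAt (fun τ => -(cc n^2) * Real.log (((n:ℝ)+1-τ) + ee n)) (h τ) τ := by
      intro τ hτ
      rw [uIcc_of_le (by linarith)] at hτ
      rcases hτ with ⟨h1, h2⟩
      have hd : (0:ℝ) < ((n:ℝ)+1-τ) + ee n := by linarith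
      have hu : HasDerivAt (fun τ:ℝ => ((n:ℝ)+1-τ) + ee n) (-1) τ := by
        simpa using (((hasDerivAt_id τ).const_sub ((n:ℝ)+1)).add_const (ee n))
      have := (hu.log hd.ne').const_mul (-(cc n^2))
      refine this.congr_deriv ?_
      rw [hh]
      field_simp
    have heq := intervalIntegral.integral_eq_sub_of_hasDerivAt hderiv hint
    rw [heq]
    norm_num
  rw [hftc, log_ee] at hmono
  have hlog : Real.log (1 + ee n) ≤ ee n :=
    le_trans (Real.log_le_sub_one_of_pos (by linarith)) (by linarith)
  have hlog0 : 0 ≤ Real.log (1 + ee n) := Real.log_nonneg (by linarith)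
  have h1 : cc n^2 * (4:ℝ)^n = 1 := cc_sq_mul n
  have h2 : cc n^2 ≤ 1 := cc_sq_le_one n hn
  have h3 : cc n^2 * Real.log (1 + ee n) ≤ 1 :=
    le_trans (mul_le_mul h2 (le_trans hlog (ee_le_one n)) hlog0 zero_le_one) (by norm_num)
  nlinarith [hmono]

lemma target_ge (n : ℤ) :
    cc n * ((4:ℝ)^n - 1) ≤ ∫ τ in (n:ℝ)..((n:ℝ)+1), gg τ * (((n:ℝ)+1) - τ) ^ (-(1/2) : ℝ) := by
  have he := ee_pos n
  have hc := cc_pos n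
  set φ : ℝ → ℝ := fun τ => cc n * ((τ-(n:ℝ)) / (((n:ℝ)+1-τ) + ee n)) with hφ
  -- step 1 : the integral equals ∫ φ
  have hcongr : ∫ τ in (n:ℝ)..((n:ℝ)+1), gg τ * (((n:ℝ)+1) - τ) ^ (-(1/2) : ℝ)
      = ∫ τ in (n:ℝ)..((n:ℝ)+1), φ τ := by
    rw [intervalIntegral.integral_of_le (by linarith : (n:ℝ) ≤ (n:ℝ)+1),
        intervalIntegral.integral_of_le (by linarith : (n:ℝ) ≤ (n:ℝ)+1),
        MeasureTheory.integral_Ioc_eq_integral_Ioo,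
        MeasureTheory.integral_Ioc_eq_integral_Ioo]
    apply MeasureTheory.setIntegral_congr_fun measurableSet_Ioo
    rintro τ ⟨h1, h2⟩
    dsimp only
    have hs : (0:ℝ) < (n:ℝ)+1-τ := by linarith
    have hd : (0:ℝ) < ((n:ℝ)+1-τ) + ee n := by linarith
    rw [gg_eq n τ h1.le h2, FF]
    have hsqrt : Real.sqrt ((n:ℝ)+1-τ) = ((n:ℝ)+1-τ) ^ ((1:ℝ)/2) := by
      rw [Real.sqrt_eq_rpow]
    have hone : ((n:ℝ)+1-τ) ^ ((1:ℝ)/2) * (((n:ℝ)+1) - τ) ^ (-(1/2) : ℝ) = 1 := by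
      rw [← Real.rpow_add hs]
      norm_num
    calc cc n * (Real.sqrt ((n:ℝ)+1-τ) * (τ-(n:ℝ)) / (((n:ℝ)+1-τ) + ee n))
          * (((n:ℝ)+1) - τ) ^ (-(1/2) : ℝ)
        = cc n * ((τ-(n:ℝ)) / (((n:ℝ)+1-τ) + ee n))
          * (((n:ℝ)+1-τ) ^ ((1:ℝ)/2) * (((n:ℝ)+1) - τ) ^ (-(1/2) : ℝ)) := by
          rw [hsqrt]; ring
      _ = φ τ := by rw [hone, hφ]; ring
  rw [hcongr]
  -- step 2 : FTC for φ
  have hφcont : ContinuousOn φ (uIcc (n:ℝ) ((n:ℝ)+1)) := by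
    rw [uIcc_of_le (by linarith : (n:ℝ) ≤ (n:ℝ)+1)]
    apply ContinuousOn.mul continuousOn_const
    apply ContinuousOn.div (Continuous.continuousOn (by continuity))
      (Continuous.continuousOn (by continuity))
    rintro τ ⟨h1, h2⟩
    exact ne_of_gt (by linarith)
  have hint : IntervalIntegrable φ volume (n:ℝ) ((n:ℝ)+1) := hφcont.intervalIntegrable
  have hftc : ∫ τ in (n:ℝ)..((n:ℝ)+1), φ τ
      = (cc n * (-(1+ee n) * Real.log (ee n) - ((n:ℝ)+1)))
        - (cc n * (-(1+ee n) * Real.log (1 + ee n) - (n:ℝ))) := by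
    have hderiv : ∀ τ ∈ uIcc (n:ℝ) ((n:ℝ)+1),
        HasDerivAt (fun τ => cc n * (-(1+ee n) * Real.log (((n:ℝ)+1-τ) + ee n) - τ)) (φ τ) τ := by
      intro τ hτ
      rw [uIcc_of_le (by linarith)] at hτ
      rcases hτ with ⟨h1, h2⟩
      have hd : (0:ℝ) < ((n:ℝ)+1-τ) + ee n := by linarith
      have hu : HasDerivAt (fun τ:ℝ => ((n:ℝ)+1-τ) + ee n) (-1) τ := by
        simpa using (((hasDerivAt_id τ).const_sub ((n:ℝ)+1)).add_const (ee n))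
      have hlog := (hu.log hd.ne').const_mul (-(1+ee n))
      have hda := (hlog.sub (hasDerivAt_id τ)).const_mul (cc n)
      have hval : cc n * (-(1+ee n) * (-1/(((n:ℝ)+1-τ)+ee n)) - 1) = φ τ := by
        rw [hφ]
        field_simp
        ring
      rw [← hval]
      simpa using hda
    have heq := intervalIntegral.integral_eq_sub_of_hasDerivAt hderiv hint
    rw [heq, show (n:ℝ)+1-((n:ℝ)+1)+ee n = ee n by ring,
      show (n:ℝ)+1-(n:ℝ)+ee n = 1+ee n by ring]
  rw [hftc, log_ee]
  have hlog0 : 0 ≤ Real.log (1 + ee n) := Real.log_nonneg (by linarith)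
  have h4 : (0:ℝ) < (4:ℝ)^n := by positivity
  nlinarith [mul_le_mul_of_nonneg_left
    (show (4:ℝ)^n ≤ (1+ee n) * (Real.log (1+ee n) + (4:ℝ)^n) by nlinarith) hc.le]

lemma mass_partial (N : ℕ) : ∫ τ in (0:ℝ)..(N:ℝ), gg τ ≤ 6 - 6 * (2:ℝ)^(-(N:ℤ)) := by
  induction N with
  | zero => simp
  | succ N ih =>
    have hadd : ∫ τ in (0:ℝ)..((N:ℝ)+1), gg τ
        = (∫ τ in (0:ℝ)..(N:ℝ), gg τ) + ∫ τ in (N:ℝ)..((N:ℝ)+1), gg τ :=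
      (intervalIntegral.integral_add_adjacent_intervals (gg_intble 0 N) (gg_intble N ((N:ℝ)+1))).symm
    have hml := mass_le (N:ℤ)
    rw [show (((N:ℤ)):ℝ) = (N:ℝ) by push_cast; ring] at hml
    have hcc : cc (N:ℤ) = (2:ℝ)^(-(N:ℤ)) := rfl
    rw [hcc] at hml
    have hcast : ((N+1:ℕ):ℝ) = (N:ℝ)+1 := by push_cast; ring
    rw [hcast, hadd]
    have hz : (2:ℝ)^(-((N+1:ℕ):ℤ)) = (2:ℝ)^(-(N:ℤ)) / 2 := by
      rw [show -((N+1:ℕ):ℤ) = -(N:ℤ) + (-1) by push_cast; ring, zpow_add₀ (two_ne_zero)]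
      norm_num
      ring
    rw [hz]
    linarith

lemma gg_integrableOn : IntegrableOn gg (Ioi (0:ℝ)) := by
  refine integrableOn_Ioi_of_intervalIntegral_norm_bounded (f := gg) (l := atTop)
    6 0 (fun N : ℕ => ?_) tendsto_natCast_atTop_atTop ?_
  · exact (gg_intble 0 (N:ℝ)).1
  · filter_upwards with N
    have : ∫ x in (0:ℝ)..(N:ℝ), ‖gg x‖ = ∫ x in (0:ℝ)..(N:ℝ), gg x :=
      intervalIntegral.integral_congr fun x _ => Real.norm_of_nonneg (gg_nonneg x)
    rw [this]
    have := mass_partial N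
    have hp : (0:ℝ) ≤ (2:ℝ)^(-(N:ℤ)) := by positivity
    linarith

lemma window_le (t : ℝ) (ht : 1 ≤ t) : ∫ τ in (t-1)..t, (gg τ)^2 ≤ 4 := by
  set m := ⌊t⌋ with hm
  have hm1 : 1 ≤ m := by rwa [hm, Int.le_floor, Int.cast_one]
  have hml : (m:ℝ) ≤ t := Int.floor_le t
  have hmu : t < (m:ℝ)+1 := Int.lt_floor_add_one t
  have hsq := gg_cont.pow 2
  have hint2 : IntegrableOn (fun τ => (gg τ)^2) (Ioc ((m:ℝ)-1) ((m:ℝ)+1)) :=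
    (hsq.intervalIntegrable ((m:ℝ)-1) ((m:ℝ)+1)).1
  have h1 : ∫ τ in (t-1)..t, (gg τ)^2 = ∫ τ in Ioc (t-1) t, (gg τ)^2 :=
    intervalIntegral.integral_of_le (by linarith)
  have h2 : ∫ τ in Ioc (t-1) t, (gg τ)^2 ≤ ∫ τ in Ioc ((m:ℝ)-1) ((m:ℝ)+1), (gg τ)^2 := by
    apply setIntegral_mono_set hint2 (ae_of_all _ fun τ => sq_nonneg (gg τ))
    exact HasSubset.Subset.eventuallyLE (Ioc_subset_Ioc (by linarith) (by linarith))
  have h3 : ∫ τ in Ioc ((m:ℝ)-1) ((m:ℝ)+1), (gg τ)^2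
      = ∫ τ in ((m:ℝ)-1)..((m:ℝ)+1), (gg τ)^2 :=
    (intervalIntegral.integral_of_le (by linarith)).symm
  have h4 : ∫ τ in ((m:ℝ)-1)..((m:ℝ)+1), (gg τ)^2
      = (∫ τ in ((m:ℝ)-1)..(m:ℝ), (gg τ)^2) + ∫ τ in (m:ℝ)..((m:ℝ)+1), (gg τ)^2 :=
    (intervalIntegral.integral_add_adjacent_intervals
      (hsq.intervalIntegrable _ _) (hsq.intervalIntegrable _ _)).symm
  have h5 := lsq_le (m-1) (by omega)
  rw [show ((m-1:ℤ):ℝ) = (m:ℝ)-1 by push_cast; ring,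
    show ((m:ℝ)-1)+1 = (m:ℝ) by ring] at h5
  have h6 := lsq_le m (by omega)
  rw [h1]
  calc (∫ τ in Ioc (t-1) t, (gg τ)^2) ≤ _ := h2
    _ ≤ 4 := by rw [h3, h4]; linarith

lemma cc_le_one (n : ℤ) (hn : 0 ≤ n) : cc n ≤ 1 := by
  rw [cc]
  exact zpow_le_one_of_nonpos₀ (by norm_num) (by linarith)

lemma cc_mul_four (n : ℤ) : cc n * (4:ℝ)^n = (2:ℝ)^n := by
  rw [cc, show (4:ℝ) = (2:ℝ)^(2:ℤ) by norm_num, ← zpow_mul, ← zpow_add₀ two_ne_zero]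
  congr 1
  ring

/-- There exists a continuous nonnegative `g` on `[0,∞)` with
`∫₀^∞ g < ∞` and uniformly bounded windowed `L²` norms
`∫_{t−1}^t g² ≤ C` for `t ≥ 1`, such that `t ↦ ∫_{t−1}^t g(τ)(t−τ)^{−1/2} dτ`
is unbounded on `[1,∞)`. -/
theorem stmt_11 :
    ∃ g : ℝ → ℝ, ContinuousOn g (Ici 0) ∧ (∀ t ≥ (0:ℝ), 0 ≤ g t) ∧
      IntegrableOn g (Ioi 0) ∧
      (∃ C : ℝ, 0 < C ∧ ∀ t ≥ (1:ℝ), (∫ τ in (t - 1)..t, g τ ^ 2) ≤ C) ∧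
      (∀ M : ℝ, ∃ t ≥ (1:ℝ), M < ∫ τ in (t - 1)..t, g τ * (t - τ) ^ (-(1/2) : ℝ)) := by
  refine ⟨gg, gg_cont.continuousOn, fun t _ => gg_nonneg t, gg_integrableOn,
    ⟨4, by norm_num, fun t ht => window_le t ht⟩, ?_⟩
  intro M
  obtain ⟨k, hk⟩ := exists_nat_gt (M+1)
  refine ⟨(k:ℝ)+1, by have : (0:ℝ) ≤ k := Nat.cast_nonneg k; linarith, ?_⟩
  rw [show (k:ℝ)+1-1 = (k:ℝ) by ring]
  have htg := target_ge (k:ℤ)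
  rw [show (((k:ℤ)):ℝ) = (k:ℝ) by push_cast; ring] at htg
  have h1 : cc (k:ℤ) * ((4:ℝ)^(k:ℤ) - 1) = (2:ℝ)^(k:ℤ) - cc (k:ℤ) := by
    rw [mul_sub, cc_mul_four, mul_one]
  have h2 : (2:ℝ)^(k:ℤ) = (2:ℝ)^k := zpow_natCast 2 k
  have h3 : (k:ℝ) < (2:ℝ)^k := by
    calc (k:ℝ) < ((2^k : ℕ):ℝ) := by exact_mod_cast Nat.lt_two_pow_self
      _ = (2:ℝ)^k := by push_cast; ring
  have h4 : cc (k:ℤ) ≤ 1 := cc_le_one _ (by positivity)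
  calc M < (2:ℝ)^(k:ℤ) - cc (k:ℤ) := by rw [h2]; linarith
    _ = cc (k:ℤ) * ((4:ℝ)^(k:ℤ) - 1) := h1.symm
    _ ≤ _ := htg
end

section
/- Let Ω ⊆ ℝⁿ be open, let 0 < p ≤ 1, T > 0, λ₁ ≥ 0, S ≥ 0, M ≥ 0, and let φ : ℝⁿ → ℝ be twice continuously differentiable with Δφ(x) = −λ₁ φ(x), 0 ≤ φ(x) ≤ 1, and ‖∇φ(x)‖² ≤ S for all x ∈ Ω, where Δ denotes the Laplacian (sum of second partial derivatives) and ∇ the gradient. Let c : ℝⁿ × ℝ → ℝ satisfy 0 ≤ c(x,t) ≤ M for x ∈ Ω, t ∈ (0,T). Let a > 0, d > 0 and b ≥ a²S + aλ₁ + M·max{1, d^{p−1} e^{a(1−p)}}. Then the function ū(x,t) := d·exp[bt − aφ(x)] satisfies ∂_t ū(x,t) − Δ_x ū(x,t) − c(x,t)·ū(x,t)^p ≥ 0 for all x ∈ Ω and t ∈ (0,T). -/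
open MeasureTheory Set Filter

/-- The Laplacian of `f : ℝⁿ → ℝ`, the sum of the second partial derivatives. -/
noncomputable def spatialLaplacian (n : ℕ) (f : EuclideanSpace ℝ (Fin n) → ℝ)
    (x : EuclideanSpace ℝ (Fin n)) : ℝ :=
  ∑ i : Fin n,
    fderiv ℝ (fun y => fderiv ℝ f y (EuclideanSpace.single i 1)) x
      (EuclideanSpace.single i 1)

lemma grad_comp_aux {n : ℕ} (f : EuclideanSpace ℝ (Fin n) → ℝ)
    (x : EuclideanSpace ℝ (Fin n)) (i : Fin n) :
    fderiv ℝ f x (EuclideanSpace.single i 1) = gradient f x i := by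
  have h : inner ℝ (gradient f x) (EuclideanSpace.single i (1:ℝ))
      = fderiv ℝ f x (EuclideanSpace.single i 1) :=
    InnerProductSpace.toDual_symm_apply
  rw [EuclideanSpace.inner_single_right] at h
  simpa using h.symm

lemma sum_sq_fderiv {n : ℕ} (f : EuclideanSpace ℝ (Fin n) → ℝ)
    (x : EuclideanSpace ℝ (Fin n)) :
    ∑ i : Fin n, (fderiv ℝ f x (EuclideanSpace.single i 1))^2
      = ‖gradient f x‖^2 := by
  have h : ‖gradient f x‖^2 = inner ℝ (gradient f x) (gradient f x) :=
    (real_inner_self_eq_norm_sq _).symm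
  rw [h, PiLp.inner_apply]
  refine Finset.sum_congr rfl fun i _ => ?_
  rw [grad_comp_aux]
  simp [RCLike.inner_apply, sq]

lemma hasFDerivAt_exp_comp {n : ℕ} (φ : EuclideanSpace ℝ (Fin n) → ℝ)
    (hφ : ContDiff ℝ 2 φ) (a d K : ℝ) (y : EuclideanSpace ℝ (Fin n)) :
    HasFDerivAt (fun z => d * Real.exp (K - a * φ z))
      ((d * Real.exp (K - a * φ y) * (-a)) • fderiv ℝ φ y) y := by
  have hφd : Differentiable ℝ φ := hφ.differentiable (by norm_num)
  have h1 : HasFDerivAt (fun z => K - a * φ z) ((-a) • fderiv ℝ φ y) y := by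
    have := (hasFDerivAt_const K y).sub ((hφd y).hasFDerivAt.const_mul a)
    refine this.congr_fderiv ?_
    ext v
    simp
  have h2 := (h1.exp).const_mul d
  refine h2.congr_fderiv ?_
  rw [smul_smul, smul_smul]

lemma lap_exp {n : ℕ} (φ : EuclideanSpace ℝ (Fin n) → ℝ)
    (hφ : ContDiff ℝ 2 φ) (a d K : ℝ) (x : EuclideanSpace ℝ (Fin n)) :
    spatialLaplacian n (fun y => d * Real.exp (K - a * φ y)) x
      = d * Real.exp (K - a * φ x) *
        (a^2 * ∑ i : Fin n, (fderiv ℝ φ x (EuclideanSpace.single i 1))^2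
          - a * spatialLaplacian n φ x) := by
  have hφd : Differentiable ℝ φ := hφ.differentiable (by norm_num)
  have hD : ContDiff ℝ 1 (fun y => fderiv ℝ φ y) := hφ.fderiv_right (by norm_num)
  unfold spatialLaplacian
  have key : ∀ i : Fin n,
      fderiv ℝ (fun y => fderiv ℝ (fun z => d * Real.exp (K - a * φ z)) y
          (EuclideanSpace.single i 1)) x (EuclideanSpace.single i 1)
      = d * Real.exp (K - a * φ x) *
          (a^2 * (fderiv ℝ φ x (EuclideanSpace.single i 1))^2
            - a * fderiv ℝ (fun y => fderiv ℝ φ y (EuclideanSpace.single i 1)) x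
                (EuclideanSpace.single i 1)) := by
    intro i
    set e := EuclideanSpace.single i (1:ℝ)
    have hrw : (fun y => fderiv ℝ (fun z => d * Real.exp (K - a * φ z)) y e)
        = fun y => (d * Real.exp (K - a * φ y) * (-a)) * (fderiv ℝ φ y e) := by
      funext y
      rw [(hasFDerivAt_exp_comp φ hφ a d K y).fderiv]
      simp
    rw [hrw]
    -- derivative of the product
    have hA : HasFDerivAt (fun y => d * Real.exp (K - a * φ y) * (-a))
        ((-a) • ((d * Real.exp (K - a * φ x) * (-a)) • fderiv ℝ φ x)) x := by
      have := (hasFDerivAt_exp_comp φ hφ a d K x).mul_const (-a)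
      convert this using 1
    have hDi : ContDiff ℝ 1 (fun y => fderiv ℝ φ y e) :=
      hD.clm_apply contDiff_const
    have hB : HasFDerivAt (fun y => fderiv ℝ φ y e)
        (fderiv ℝ (fun y => fderiv ℝ φ y e) x) x :=
      (hDi.differentiable (by norm_num) x).hasFDerivAt
    have hprod : HasFDerivAt (fun y => d * Real.exp (K - a * φ y) * (-a) * fderiv ℝ φ y e) _ x := hA.mul hB
    rw [hprod.fderiv]
    simp only [ContinuousLinearMap.add_apply, ContinuousLinearMap.smul_apply,
      smul_eq_mul]
    ring
  rw [Finset.sum_congr rfl (fun i _ => key i), ← Finset.mul_sum]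
  rw [Finset.sum_sub_distrib, ← Finset.mul_sum, ← Finset.mul_sum]

/-- With `0 < p ≤ 1`, an eigenfunction-type `φ` (`Δφ = −lam₁φ`,
`0 ≤ φ ≤ 1`, `‖∇φ‖² ≤ S` on `Ω`), `0 ≤ c ≤ M` on `Ω × (0,T)`, and
`b ≥ a²S + alam₁ + M max{1, d^{p−1} e^{a(1−p)}}`, the function
`ū(x,t) = d exp[bt − aφ(x)]` satisfies `ū_t − Δū − c ū^p ≥ 0` on `Ω × (0,T)`. -/
theorem stmt_16 (n : ℕ) (Ω : Set (EuclideanSpace ℝ (Fin n))) (hΩ : IsOpen Ω)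
    (p T lam₁ S M : ℝ) (hp0 : 0 < p) (hp1 : p ≤ 1) (hT : 0 < T)
    (hlam : 0 ≤ lam₁) (hS : 0 ≤ S) (hM : 0 ≤ M)
    (φ : EuclideanSpace ℝ (Fin n) → ℝ) (hφ : ContDiff ℝ 2 φ)
    (hlap : ∀ x ∈ Ω, spatialLaplacian n φ x = -lam₁ * φ x)
    (hφ01 : ∀ x ∈ Ω, φ x ∈ Icc (0:ℝ) 1)
    (hgrad : ∀ x ∈ Ω, ‖gradient φ x‖ ^ 2 ≤ S)
    (c : EuclideanSpace ℝ (Fin n) → ℝ → ℝ)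
    (hc : ∀ x ∈ Ω, ∀ t ∈ Ioo (0:ℝ) T, c x t ∈ Icc (0:ℝ) M)
    (a d b : ℝ) (ha : 0 < a) (hd : 0 < d)
    (hb : a ^ 2 * S + a * lam₁ + M * max 1 (d ^ (p - 1) * Real.exp (a * (1 - p))) ≤ b) :
    ∀ x ∈ Ω, ∀ t ∈ Ioo (0:ℝ) T,
      0 ≤ deriv (fun s => d * Real.exp (b * s - a * φ x)) t
          - spatialLaplacian n (fun y => d * Real.exp (b * t - a * φ y)) x
          - c x t * (d * Real.exp (b * t - a * φ x)) ^ p := by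
  intro x hx t ht
  set E0 : ℝ := d * Real.exp (b * t - a * φ x) with hE0
  have hE0pos : 0 < E0 := mul_pos hd (Real.exp_pos _)
  -- time derivative
  have hderiv : deriv (fun s => d * Real.exp (b * s - a * φ x)) t = E0 * b := by
    have h1 : HasDerivAt (fun s : ℝ => b * s - a * φ x) b t := by
      simpa using ((hasDerivAt_id t).const_mul b).sub_const (a * φ x)
    have h2 := (h1.exp).const_mul d
    rw [h2.deriv]; ring
  -- Laplacian
  have hlapg := lap_exp φ hφ a d (b * t) x
  rw [sum_sq_fderiv φ x] at hlapg
  have hmax : (1:ℝ) ≤ max 1 (d ^ (p - 1) * Real.exp (a * (1 - p))) := le_max_left _ _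
  have hb0 : 0 ≤ b := by
    have : (0:ℝ) ≤ a ^ 2 * S + a * lam₁ + M * max 1 (d ^ (p - 1) * Real.exp (a * (1 - p))) := by
      have := mul_nonneg hM (le_trans zero_le_one hmax)
      positivity
    linarith
  have hφx := hφ01 x hx
  have hcx := hc x hx t ht
  -- bound on E0 ^ (p - 1)
  have hE0p : E0 ^ (p - 1) ≤ max 1 (d ^ (p - 1) * Real.exp (a * (1 - p))) := by
    have h1 : E0 ^ (p - 1) = d ^ (p - 1) * Real.exp ((b * t - a * φ x) * (p - 1)) := by
      rw [hE0, Real.mul_rpow hd.le (Real.exp_pos _).le, ← Real.exp_mul]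
    have h2 : (b * t - a * φ x) * (p - 1) ≤ a * (1 - p) := by
      have hbt : 0 ≤ b * t := mul_nonneg hb0 ht.1.le
      have haφ : a * φ x ≤ a := by nlinarith [hφx.2, hφx.1]
      nlinarith [hφx.1, mul_nonneg ha.le hφx.1]
    calc E0 ^ (p - 1) ≤ d ^ (p - 1) * Real.exp (a * (1 - p)) := by
          rw [h1]
          exact mul_le_mul_of_nonneg_left (Real.exp_le_exp.mpr h2)
            (Real.rpow_nonneg hd.le _)
      _ ≤ _ := le_max_right _ _
  -- E0 ^ p = E0 * E0 ^ (p - 1)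
  have hEp : E0 ^ p = E0 * E0 ^ (p - 1) := by
    rw [← Real.rpow_one_add' (by positivity) (by intro h; nlinarith)]
    ring_nf
  rw [hderiv, hlapg, hlap x hx]
  have hG := hgrad x hx
  have hcup : c x t * E0 ^ p ≤ M * (E0 * max 1 (d ^ (p - 1) * Real.exp (a * (1 - p)))) := by
    rw [hEp]
    have h1 : c x t * (E0 * E0 ^ (p - 1)) ≤ M * (E0 * E0 ^ (p - 1)) := by
      apply mul_le_mul_of_nonneg_right hcx.2
      positivity
    have h2 : M * (E0 * E0 ^ (p - 1)) ≤ M * (E0 * max 1 (d ^ (p - 1) * Real.exp (a * (1 - p)))) := by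
      apply mul_le_mul_of_nonneg_left _ hM
      exact mul_le_mul_of_nonneg_left hE0p hE0pos.le
    linarith
  have hmain : E0 * (a ^ 2 * S + a * lam₁ + M * max 1 (d ^ (p - 1) * Real.exp (a * (1 - p))))
      ≤ E0 * b := mul_le_mul_of_nonneg_left hb hE0pos.le
  have hφb : a ^ 2 * ‖gradient φ x‖ ^ 2 ≤ a ^ 2 * S :=
    mul_le_mul_of_nonneg_left hG (by positivity)
  have hφlam : a * (lam₁ * φ x) ≤ a * lam₁ := by
    nlinarith [mul_nonneg ha.le hlam, hφx.2, hφx.1]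
  rw [← hE0]
  nlinarith [mul_le_mul_of_nonneg_left hφb hE0pos.le,
    mul_le_mul_of_nonneg_left hφlam hE0pos.le]
end

section
/- Let Ω′ ⊆ ℝⁿ be open, let l > 1, 0 < p ≤ 1, T > 0, κ > 0, B > 0, c̄ ≥ 0, F > 0, and let f : ℝⁿ → ℝ be twice continuously differentiable with 0 < f(x) ≤ F and Δf(x) − (l/(l−1))·‖∇f(x)‖²/f(x) ≥ −κ for all x ∈ Ω′, where Δ denotes the Laplacian and ∇ the gradient. Let c : ℝⁿ × ℝ → ℝ satisfy 0 ≤ c(x,t) ≤ c̄ for x ∈ Ω′, t ∈ [0,T), and let μ ≥ c̄·((F + κT)^{1/(l−1)}/B)^{1−p}. Then the function w(x,t) := B·e^{μt}·(f(x) + κ(T−t))^{−1/(l−1)} satisfies ∂_t w(x,t) − Δ_x w(x,t) − c(x,t)·w(x,t)^p ≥ 0 for all x ∈ Ω′ and t ∈ [0,T). -/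
open MeasureTheory Set Filter

/-!
Write `r = 1/(l-1)` and `g = f + κ(T-t)`. The chain rule gives
`w_t - Δw = μ w + B e^{μt} r g^{-r-1} (κ + Δf - (r+1)‖∇f‖²/g)`, and the bracket is nonnegative
because `g ≥ f` and `r + 1 = l/(l-1)`. For the reaction term, `w ≥ m := B (F + κT)^{-r}`, so
`c w^p = c w^{p-1} w ≤ c̄ m^{p-1} w ≤ μ w` since `p ≤ 1`.
-/

open Topology

section Laplacian

variable {n : ℕ}

theorem spatialLaplacian_const_mul (C : ℝ) (h : EuclideanSpace ℝ (Fin n) → ℝ)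
    (x : EuclideanSpace ℝ (Fin n)) :
    spatialLaplacian n (fun y => C * h y) x = C * spatialLaplacian n h x := by
  have hC (g : EuclideanSpace ℝ (Fin n) → ℝ) : fderiv ℝ (fun y => C * g y) = C • fderiv ℝ g :=
    fderiv_const_smul_field (f := g) C
  simp only [spatialLaplacian, hC, Pi.smul_apply, smul_apply, smul_eq_mul,
    Finset.mul_sum]

theorem norm_gradient_sq_eq_sum (f : EuclideanSpace ℝ (Fin n) → ℝ)
    (x : EuclideanSpace ℝ (Fin n)) :
    ‖gradient f x‖ ^ 2 = ∑ i, fderiv ℝ f x (EuclideanSpace.single i 1) ^ 2 := by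
  simp [EuclideanSpace.real_norm_sq_eq, ← inner_gradient_left, EuclideanSpace.inner_single_right]

theorem spatialLaplacian_comp {f : EuclideanSpace ℝ (Fin n) → ℝ} {x : EuclideanSpace ℝ (Fin n)}
    (hf : ContDiffAt ℝ 2 f x) {φ φ' : ℝ → ℝ} {φ'' : ℝ}
    (hφ : ∀ᶠ s in 𝓝 (f x), HasDerivAt φ (φ' s) s) (hφ' : HasDerivAt φ' φ'' (f x)) :
    spatialLaplacian n (fun y => φ (f y)) x
      = φ' (f x) * spatialLaplacian n f x + φ'' * ‖gradient f x‖ ^ 2 := by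
  have hf_near : ∀ᶠ y in 𝓝 x, HasDerivAt φ (φ' (f y)) (f y) ∧ DifferentiableAt ℝ f y :=
    (hf.continuousAt.eventually hφ).and <|
      (hf.eventually (by simp)).mono fun y hy => hy.differentiableAt (by simp)
  have hf' : HasFDerivAt f (fderiv ℝ f x) x := (hf.differentiableAt (by simp)).hasFDerivAt
  have hf'' : DifferentiableAt ℝ (fderiv ℝ f) x :=
    (hf.fderiv_right (m := 1) le_rfl).differentiableAt one_ne_zero
  rw [norm_gradient_sq_eq_sum, spatialLaplacian, spatialLaplacian, Finset.mul_sum, Finset.mul_sum,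
    ← Finset.sum_add_distrib]
  refine Finset.sum_congr rfl fun i _ => ?_
  set e := EuclideanSpace.single i (1 : ℝ)
  have hfirst : (fun y => fderiv ℝ (fun z => φ (f z)) y e)
      =ᶠ[𝓝 x] fun y => φ' (f y) * fderiv ℝ f y e := by
    filter_upwards [hf_near] with y ⟨hφy, hfy⟩
    rw [HasFDerivAt.fderiv (f := fun z => φ (f z)) (hφy.comp_hasFDerivAt y hfy.hasFDerivAt)]
    rfl
  rw [hfirst.fderiv_eq, HasFDerivAt.fderiv (f := fun y => φ' (f y) * fderiv ℝ f y e)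
    ((hφ'.comp_hasFDerivAt x hf').mul (hf''.clm_apply (differentiableAt_const e)).hasFDerivAt)]
  simp only [Function.comp_apply, add_apply, smul_apply, smul_eq_mul, add_right_inj]
  ring

end Laplacian

theorem mul_rpow_le_mul_of_le {c cbar μ m w p : ℝ} (hm : 0 < m) (hmw : m ≤ w) (hp : p ≤ 1)
    (hc0 : 0 ≤ c) (hc : c ≤ cbar) (hμ : cbar * m⁻¹ ^ (1 - p) ≤ μ) : c * w ^ p ≤ μ * w := by
  have hw : 0 < w := hm.trans_le hmw
  have hwm : w ^ (p - 1) ≤ m⁻¹ ^ (1 - p) := by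
    rw [Real.inv_rpow hm.le, ← Real.rpow_neg hm.le, neg_sub]
    exact Real.rpow_le_rpow_of_nonpos hm hmw (by linarith)
  calc c * w ^ p ≤ cbar * w ^ (p - 1) * w := by
        rw [mul_assoc, ← Real.rpow_add_one hw.ne', sub_add_cancel]
        gcongr
    _ ≤ cbar * m⁻¹ ^ (1 - p) * w := by gcongr; linarith
    _ ≤ μ * w := by gcongr

section Comparison

variable {n : ℕ} (B μ κ T r : ℝ) (f : EuclideanSpace ℝ (Fin n) → ℝ)

/-- The function `w` of the statement, with `r = 1/(l-1)`. -/
noncomputable def comparisonFunction (x : EuclideanSpace ℝ (Fin n)) (t : ℝ) : ℝ :=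
  B * Real.exp (μ * t) * (f x + κ * (T - t)) ^ (-r)

variable {B μ κ T r f} {x : EuclideanSpace ℝ (Fin n)} {t : ℝ}

theorem hasDerivAt_comparisonFunction (hx : 0 < f x + κ * (T - t)) :
    HasDerivAt (comparisonFunction B μ κ T r f x)
      (μ * comparisonFunction B μ κ T r f x t
        + B * Real.exp (μ * t) * (κ * r * (f x + κ * (T - t)) ^ (-r - 1))) t := by
  have hg : HasDerivAt (fun s => f x + κ * (T - s)) (-κ) t := by
    simpa using ((hasDerivAt_id t).const_sub T).const_mul κ |>.const_add (f x)
  refine ((((hasDerivAt_id t).const_mul μ).exp.const_mul B).mul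
    (hg.rpow_const (p := -r) (Or.inl hx.ne'))).congr_deriv ?_
  simp only [comparisonFunction, id_eq]
  ring

theorem spatialLaplacian_comparisonFunction (hf : ContDiffAt ℝ 2 f x)
    (hx : 0 < f x + κ * (T - t)) :
    spatialLaplacian n (comparisonFunction B μ κ T r f · t) x
      = B * Real.exp (μ * t) * (-r * (f x + κ * (T - t)) ^ (-r - 1) * spatialLaplacian n f x
        + r * (r + 1) * (f x + κ * (T - t)) ^ (-r - 2) * ‖gradient f x‖ ^ 2) := by
  set a := κ * (T - t)
  have hφ : ∀ᶠ s in 𝓝 (f x), HasDerivAt (fun s => (s + a) ^ (-r)) (-r * (s + a) ^ (-r - 1)) s := by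
    filter_upwards [(continuous_add_const a).continuousAt.eventually (lt_mem_nhds hx)] with s hs
    simpa using ((hasDerivAt_id s).add_const a).rpow_const (p := -r) (Or.inl hs.ne')
  have hφ' : HasDerivAt (fun s => -r * (s + a) ^ (-r - 1))
      (-r * ((-r - 1) * (f x + a) ^ (-r - 2))) (f x) := by
    refine ((((hasDerivAt_id (f x)).add_const a).rpow_const (p := -r - 1)
      (Or.inl hx.ne')).const_mul (-r)).congr_deriv ?_
    rw [id_eq, show -r - 1 - 1 = -r - 2 by ring]
    ring
  unfold comparisonFunction
  rw [spatialLaplacian_const_mul, spatialLaplacian_comp hf hφ hφ']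
  ring

theorem mul_comparisonFunction_le_deriv_sub_spatialLaplacian (hf : ContDiffAt ℝ 2 f x)
    (hB : 0 ≤ B) (hr : 0 < r) (hfx : 0 < f x) (hκt : 0 ≤ κ * (T - t))
    (hf_ineq : -κ ≤ spatialLaplacian n f x - (r + 1) * ‖gradient f x‖ ^ 2 / f x) :
    μ * comparisonFunction B μ κ T r f x t ≤ deriv (comparisonFunction B μ κ T r f x) t
      - spatialLaplacian n (comparisonFunction B μ κ T r f · t) x := by
  set g := f x + κ * (T - t)
  have hg : 0 < g := by positivity
  rw [(hasDerivAt_comparisonFunction hg).deriv, spatialLaplacian_comparisonFunction hf hg]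
  have hgrad : (r + 1) * ‖gradient f x‖ ^ 2 / g ≤ (r + 1) * ‖gradient f x‖ ^ 2 / f x := by
    gcongr
    linarith
  have hpow : g ^ (-r - 2) = g ^ (-r - 1) / g := by
    rw [show -r - 2 = -r - 1 - 1 by ring, Real.rpow_sub_one hg.ne']
  have hsplit : B * Real.exp (μ * t) * (κ * r * g ^ (-r - 1))
      - B * Real.exp (μ * t) * (-r * g ^ (-r - 1) * spatialLaplacian n f x
        + r * (r + 1) * g ^ (-r - 2) * ‖gradient f x‖ ^ 2)
      = B * Real.exp (μ * t) * r * g ^ (-r - 1)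
        * (κ + spatialLaplacian n f x - (r + 1) * ‖gradient f x‖ ^ 2 / g) := by
    rw [hpow]
    ring
  have hnonneg : 0 ≤ B * Real.exp (μ * t) * r * g ^ (-r - 1)
      * (κ + spatialLaplacian n f x - (r + 1) * ‖gradient f x‖ ^ 2 / g) :=
    mul_nonneg (by positivity) (by linarith)
  linarith

theorem le_comparisonFunction {M : ℝ} (hB : 0 ≤ B) (hr : 0 ≤ r) (hμt : 0 ≤ μ * t)
    (hx : 0 < f x + κ * (T - t)) (hM : f x + κ * (T - t) ≤ M) :
    B * M ^ (-r) ≤ comparisonFunction B μ κ T r f x t :=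
  calc B * M ^ (-r) ≤ B * (f x + κ * (T - t)) ^ (-r) :=
        mul_le_mul_of_nonneg_left (Real.rpow_le_rpow_of_nonpos hx hM (by linarith)) hB
    _ ≤ comparisonFunction B μ κ T r f x t := by
        rw [comparisonFunction, mul_right_comm]
        exact le_mul_of_one_le_right (by positivity) (Real.one_le_exp hμt)

end Comparison

theorem stmt_17_general (n : ℕ) (Ω' : Set (EuclideanSpace ℝ (Fin n)))
    (l p T κ B cbar F : ℝ) (hl : 1 < l) (hp1 : p ≤ 1)
    (hκ : 0 < κ) (hB : 0 < B)
    (f : EuclideanSpace ℝ (Fin n) → ℝ) (hf : ContDiff ℝ 2 f)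
    (hf_pos : ∀ x ∈ Ω', 0 < f x) (hf_le : ∀ x ∈ Ω', f x ≤ F)
    (hf_ineq : ∀ x ∈ Ω',
      -κ ≤ spatialLaplacian n f x - (l / (l - 1)) * ‖gradient f x‖ ^ 2 / f x)
    (c : EuclideanSpace ℝ (Fin n) → ℝ → ℝ)
    (hc : ∀ x ∈ Ω', ∀ t ∈ Ico (0:ℝ) T, c x t ∈ Icc (0:ℝ) cbar)
    (μ : ℝ) (hμ : cbar * ((F + κ * T) ^ (1 / (l - 1)) / B) ^ (1 - p) ≤ μ) :
    ∀ x ∈ Ω', ∀ t ∈ Ico (0:ℝ) T,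
      0 ≤ deriv (fun s => B * Real.exp (μ * s) *
              (f x + κ * (T - s)) ^ (-(1 / (l - 1)) : ℝ)) t
          - spatialLaplacian n (fun y => B * Real.exp (μ * t) *
              (f y + κ * (T - t)) ^ (-(1 / (l - 1)) : ℝ)) x
          - c x t * (B * Real.exp (μ * t) *
              (f x + κ * (T - t)) ^ (-(1 / (l - 1)) : ℝ)) ^ p := by
  intro x hx t ⟨ht0, htT⟩
  obtain ⟨hc0, hc_le⟩ := hc x hx t ⟨ht0, htT⟩
  set r := 1 / (l - 1)
  have hr : 0 < r := one_div_pos.2 (sub_pos.2 hl)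
  have hlr : l / (l - 1) = r + 1 := by rw [div_add_one (sub_pos.2 hl).ne', add_sub_cancel]
  have hκt : 0 ≤ κ * (T - t) := by nlinarith
  have hg : 0 < f x + κ * (T - t) := by linarith [hf_pos x hx]
  have hgM : f x + κ * (T - t) ≤ F + κ * T := by nlinarith [hf_le x hx]
  have hM : 0 < F + κ * T := hg.trans_le hgM
  have hm_inv : (B * (F + κ * T) ^ (-r))⁻¹ = (F + κ * T) ^ r / B := by
    rw [Real.rpow_neg hM.le]
    field_simp
  have hμ0 : 0 ≤ μ := (mul_nonneg (hc0.trans hc_le) (by positivity)).trans hμ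
  have hdiffusion := mul_comparisonFunction_le_deriv_sub_spatialLaplacian (μ := μ) hf.contDiffAt
    hB.le hr (hf_pos x hx) hκt (hlr ▸ hf_ineq x hx)
  have hreaction := mul_rpow_le_mul_of_le (by positivity)
    (le_comparisonFunction (μ := μ) hB.le hr.le (mul_nonneg hμ0 ht0) hg hgM) hp1 hc0 hc_le
    (hm_inv ▸ hμ)
  change 0 ≤ deriv (comparisonFunction B μ κ T r f x) t
    - spatialLaplacian n (comparisonFunction B μ κ T r f · t) x
    - c x t * comparisonFunction B μ κ T r f x t ^ p
  linarith

/-- With `l > 1`, `0 < p ≤ 1`, `f` satisfying `0 < f ≤ F` and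
`Δf − (l/(l−1))‖∇f‖²/f ≥ −κ` on `Ω′`, `0 ≤ c ≤ c̄` on `Ω′ × [0,T)`, and
`μ ≥ c̄ ((F + κT)^{1/(l−1)}/B)^{1−p}`, the function
`w(x,t) = B e^{μt} (f(x) + κ(T−t))^{−1/(l−1)}` satisfies
`w_t − Δw − c w^p ≥ 0` on `Ω′ × [0,T)`. -/
theorem stmt_17 (n : ℕ) (Ω' : Set (EuclideanSpace ℝ (Fin n))) (hΩ' : IsOpen Ω')
    (l p T κ B cbar F : ℝ) (hl : 1 < l) (hp0 : 0 < p) (hp1 : p ≤ 1) (hT : 0 < T)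
    (hκ : 0 < κ) (hB : 0 < B) (hcbar : 0 ≤ cbar) (hF : 0 < F)
    (f : EuclideanSpace ℝ (Fin n) → ℝ) (hf : ContDiff ℝ 2 f)
    (hf_pos : ∀ x ∈ Ω', 0 < f x) (hf_le : ∀ x ∈ Ω', f x ≤ F)
    (hf_ineq : ∀ x ∈ Ω',
      -κ ≤ spatialLaplacian n f x - (l / (l - 1)) * ‖gradient f x‖ ^ 2 / f x)
    (c : EuclideanSpace ℝ (Fin n) → ℝ → ℝ)
    (hc : ∀ x ∈ Ω', ∀ t ∈ Ico (0:ℝ) T, c x t ∈ Icc (0:ℝ) cbar)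
    (μ : ℝ) (hμ : cbar * ((F + κ * T) ^ (1 / (l - 1)) / B) ^ (1 - p) ≤ μ) :
    ∀ x ∈ Ω', ∀ t ∈ Ico (0:ℝ) T,
      0 ≤ deriv (fun s => B * Real.exp (μ * s) *
              (f x + κ * (T - s)) ^ (-(1 / (l - 1)) : ℝ)) t
          - spatialLaplacian n (fun y => B * Real.exp (μ * t) *
              (f y + κ * (T - t)) ^ (-(1 / (l - 1)) : ℝ)) x
          - c x t * (B * Real.exp (μ * t) *
              (f x + κ * (T - t)) ^ (-(1 / (l - 1)) : ℝ)) ^ p :=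
  stmt_17_general n Ω' l p T κ B cbar F hl hp1 hκ hB f hf hf_pos hf_le hf_ineq c hc μ hμ
end
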